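/- arXiv:2110.01255 — 9 statements merged into one kernel-verified Lean document; each statement's English description precedes it below -/
import Mathlib

section
/- Let $F_t:[0,1]\to[0,1]$ be functions with $F_t(u) \leq u$ for all $u$, and suppose null $p$-values satisfy $\mathbb{P}(p_t \leq u) \leq F_t(u)$ for all $t \in \mathcal{H}_0$ and $u \in [0,1]$. Define deterministic critical values recursively by $\alpha_T = \sum_{t=1}^{T}\alpha\gamma_t - \sum_{t=1}^{T-1} F_t(\alpha_t)$, equivalently $\alpha_1 = \alpha\gamma_1$ and $\alpha_T = \alpha\gamma_T + (\alpha_{T-1} - F_{T-1}(\alpha_{T-1}))$ for $T \geq 2$. Then: (i) $\alpha_T \geq \alpha\gamma_T$ for all $T$ (in particular $\alpha_T \geq 0$), and (ii) for all $T \geq 1$, $\sum_{t=1}^{T} F_t(\alpha_t) \leq \alpha$, hence $\mathbb{P}(\exists t \leq T: t \in \mathcal{H}_0, p_t \leq \alpha_t) \leq \alpha$. -/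
open MeasureTheory Finset

/-- Greedy super-uniformity reward for online Bonferroni: the rewarded (deterministic)
critical values dominate the Bonferroni ones and still control the FWER. -/
theorem stmt1 {Ω : Type*} [MeasurableSpace Ω] (μ : Measure Ω) [IsProbabilityMeasure μ]
    (p : ℕ → Ω → ℝ) (H0 : Set ℕ) (γ : ℕ → ℝ) (α : ℝ)
    (hα : 0 < α ∧ α < 1)
    (hγ : ∀ t, 0 ≤ γ t)
    (hγsum : ∀ T : ℕ, ∑ t ∈ Finset.Icc 1 T, γ t ≤ 1)
    (F : ℕ → ℝ → ℝ)
    (hF : ∀ t u, 0 ≤ u → 0 ≤ F t u ∧ F t u ≤ u)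
    (hsup : ∀ t ∈ H0, ∀ u ∈ Set.Icc (0:ℝ) 1, μ {ω | p t ω ≤ u} ≤ ENNReal.ofReal (F t u))
    (a : ℕ → ℝ)
    (ha1 : a 1 = α * γ 1)
    (harec : ∀ T, 2 ≤ T → a T = α * γ T + (a (T-1) - F (T-1) (a (T-1)))) :
    (∀ T, 1 ≤ T → α * γ T ≤ a T) ∧
    (∀ T, 1 ≤ T →
      (∑ t ∈ Finset.Icc 1 T, F t (a t)) ≤ α ∧
      μ {ω | ∃ t ∈ Finset.Icc 1 T, t ∈ H0 ∧ p t ω ≤ a t} ≤ ENNReal.ofReal α) := by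
  obtain ⟨hα0, hα1⟩ := hα
  -- main invariant
  have key : ∀ T, 1 ≤ T → α * γ T ≤ a T ∧
      a T = α * (∑ t ∈ Finset.Icc 1 T, γ t) - ∑ t ∈ Finset.Icc 1 (T-1), F t (a t) := by
    intro T hT
    induction T, hT using Nat.le_induction with
    | base =>
      constructor
      · rw [ha1]
      · simp [ha1]
    | succ T hT ih =>
      obtain ⟨ih1, ih2⟩ := ih
      have haT0 : 0 ≤ a T := le_trans (mul_nonneg hα0.le (hγ T)) ih1
      have hFle : F T (a T) ≤ a T := (hF T (a T) haT0).2
      have hrec : a (T+1) = α * γ (T+1) + (a T - F T (a T)) := by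
        have := harec (T+1) (by omega)
        simpa using this
      constructor
      · rw [hrec]; linarith
      · have hs1 : ∑ t ∈ Finset.Icc 1 (T+1), γ t
            = (∑ t ∈ Finset.Icc 1 T, γ t) + γ (T+1) :=
          Finset.sum_Icc_succ_top (by omega) _
        have hs2 : ∑ t ∈ Finset.Icc 1 (T+1-1), F t (a t)
            = (∑ t ∈ Finset.Icc 1 (T-1), F t (a t)) + F T (a T) := by
          simp only [Nat.add_sub_cancel]
          rcases eq_or_lt_of_le hT with h | h
          · rw [← h]; simp
          · have : T = (T-1) + 1 := by omega
            rw [this] at *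
            exact Finset.sum_Icc_succ_top (by omega) _
        rw [hrec, hs1, hs2]; linarith
  have apos : ∀ T, 1 ≤ T → 0 ≤ a T := fun T hT =>
    le_trans (mul_nonneg hα0.le (hγ T)) (key T hT).1
  have aIcc : ∀ T, 1 ≤ T → a T ∈ Set.Icc (0:ℝ) 1 := by
    intro T hT
    refine ⟨apos T hT, ?_⟩
    have h2 := (key T hT).2
    have hFn : 0 ≤ ∑ t ∈ Finset.Icc 1 (T-1), F t (a t) := by
      apply Finset.sum_nonneg
      intro t ht
      exact (hF t (a t) (apos t (Finset.mem_Icc.mp ht).1)).1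
    have : a T ≤ α * (∑ t ∈ Finset.Icc 1 T, γ t) := by rw [h2]; linarith
    calc a T ≤ α * (∑ t ∈ Finset.Icc 1 T, γ t) := this
      _ ≤ α * 1 := by
          exact mul_le_mul_of_nonneg_left (hγsum T) hα0.le
      _ ≤ 1 := by linarith
  have sumF : ∀ T, 1 ≤ T → (∑ t ∈ Finset.Icc 1 T, F t (a t)) ≤ α := by
    intro T hT
    have h2 := (key T hT).2
    have hFle : F T (a T) ≤ a T := (hF T (a T) (apos T hT)).2
    have hsplit : ∑ t ∈ Finset.Icc 1 T, F t (a t)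
        = (∑ t ∈ Finset.Icc 1 (T-1), F t (a t)) + F T (a T) := by
      rcases eq_or_lt_of_le hT with h | h
      · rw [← h]; simp
      · have hT' : T = (T-1) + 1 := by omega
        rw [hT'] at *
        simp only [Nat.add_sub_cancel]
        exact Finset.sum_Icc_succ_top (by omega) _
    have hγle : α * (∑ t ∈ Finset.Icc 1 T, γ t) ≤ α :=
      le_trans (mul_le_mul_of_nonneg_left (hγsum T) hα0.le) (by linarith)
    rw [hsplit]
    linarith [h2]
  refine ⟨fun T hT => (key T hT).1, fun T hT => ⟨sumF T hT, ?_⟩⟩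
  have hsub : {ω | ∃ t ∈ Finset.Icc 1 T, t ∈ H0 ∧ p t ω ≤ a t}
      ⊆ ⋃ t ∈ Finset.Icc 1 T, {ω | t ∈ H0 ∧ p t ω ≤ a t} := by
    intro ω hω
    obtain ⟨t, ht, hh⟩ := hω
    exact Set.mem_biUnion ht hh
  calc μ {ω | ∃ t ∈ Finset.Icc 1 T, t ∈ H0 ∧ p t ω ≤ a t}
      ≤ μ (⋃ t ∈ Finset.Icc 1 T, {ω | t ∈ H0 ∧ p t ω ≤ a t}) := measure_mono hsub
    _ ≤ ∑ t ∈ Finset.Icc 1 T, μ {ω | t ∈ H0 ∧ p t ω ≤ a t} :=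
        measure_biUnion_finset_le _ _
    _ ≤ ∑ t ∈ Finset.Icc 1 T, ENNReal.ofReal (F t (a t)) := by
        apply Finset.sum_le_sum
        intro t ht
        by_cases hH : t ∈ H0
        · calc μ {ω | t ∈ H0 ∧ p t ω ≤ a t} ≤ μ {ω | p t ω ≤ a t} :=
              measure_mono (fun ω hω => hω.2)
            _ ≤ ENNReal.ofReal (F t (a t)) :=
              hsup t hH (a t) (aIcc t (Finset.mem_Icc.mp ht).1)
        · have : {ω | t ∈ H0 ∧ p t ω ≤ a t} = ∅ := by
            ext ω; simp [hH]
          simp [this]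
    _ = ENNReal.ofReal (∑ t ∈ Finset.Icc 1 T, F t (a t)) := by
        rw [ENNReal.ofReal_sum_of_nonneg]
        intro t ht
        exact (hF t (a t) (apos t (Finset.mem_Icc.mp ht).1)).1
    _ ≤ ENNReal.ofReal α := ENNReal.ofReal_le_ofReal (sumF T hT)
end

section
/- Let $(\alpha^0_t)_{t\geq 1}$ be a nonnegative sequence, $\lambda \in [0,1)$, $(p_t)_{t \geq 1}$ real numbers, $(\gamma'_t)_{t\geq 1}$ real numbers with partial sums $a_T = \sum_{t=1}^T \gamma'_t$, and $F_t$ arbitrary functions. Define $(\tilde\alpha_t)$ by the recursion $\tilde\alpha_T = \alpha^0_T + \sum_{t=1}^{T-1}\mathbf{1}\{p_t \geq \lambda\}\alpha^0_t - \sum_{t=1}^{T-1}\mathbf{1}\{p_t \geq \lambda\}\big[(1-a_{T-t})\tilde\alpha_t + a_{T-t}F_t(\tilde\alpha_t)\big]$, and define $(\bar\alpha_t)$ by $\bar\alpha_T = \alpha^0_T + \sum_{1\leq t\leq T-1,\, p_t\geq\lambda}\gamma'_{T-t}(\bar\alpha_t - F_t(\bar\alpha_t)) + \mathbf{1}\{p_{T-1}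 < \lambda\}(\bar\alpha_{T-1} - \alpha^0_{T-1})$ (with the last term zero for $T=1$). Then $\tilde\alpha_t = \bar\alpha_t$ for all $t \geq 1$. -/
open Finset

/-- Representation lemma: the two recursions defining the rewarded critical values coincide. -/
theorem stmt2 (α0 : ℕ → ℝ) (hα0 : ∀ t, 0 ≤ α0 t)
    (lam : ℝ) (hlam : 0 ≤ lam ∧ lam < 1)
    (p γ' : ℕ → ℝ) (F : ℕ → ℝ → ℝ)
    (a : ℕ → ℝ) (ha : ∀ T, a T = ∑ t ∈ Finset.Icc 1 T, γ' t)
    (ta ba : ℕ → ℝ)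
    (hta : ∀ T, 1 ≤ T → ta T = α0 T
      + (∑ t ∈ Finset.Icc 1 (T-1), if lam ≤ p t then α0 t else 0)
      - ∑ t ∈ Finset.Icc 1 (T-1),
          (if lam ≤ p t then (1 - a (T-t)) * ta t + a (T-t) * F t (ta t) else 0))
    (hba : ∀ T, 1 ≤ T → ba T = α0 T
      + (∑ t ∈ Finset.Icc 1 (T-1), if lam ≤ p t then γ' (T-t) * (ba t - F t (ba t)) else 0)
      + (if 2 ≤ T ∧ p (T-1) < lam then ba (T-1) - α0 (T-1) else 0)) :
    ∀ t, 1 ≤ t → ta t = ba t := by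
  have ha1 : a 1 = γ' 1 := by rw [ha]; simp
  have key : ∀ m : ℕ, ta (m+2) = α0 (m+2)
      + (∑ t ∈ Finset.Icc 1 (m+1), if lam ≤ p t then γ' (m+2-t) * (ta t - F t (ta t)) else 0)
      + (if p (m+1) < lam then ta (m+1) - α0 (m+1) else 0) := by
    intro m
    have h2 := hta (m+2) (by omega)
    have h1 := hta (m+1) (by omega)
    simp only [show m+2-1 = m+1 from rfl, show m+1-1 = m from rfl] at h2 h1
    rw [Finset.sum_Icc_succ_top (by omega : 1 ≤ m+1),
        Finset.sum_Icc_succ_top (by omega : 1 ≤ m+1),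
        show m+2-(m+1) = 1 from by omega] at h2
    rw [Finset.sum_Icc_succ_top (by omega : 1 ≤ m+1),
        show m+2-(m+1) = 1 from by omega]
    have hsum : (∑ t ∈ Finset.Icc 1 m,
          (if lam ≤ p t then (1 - a (m+2-t)) * ta t + a (m+2-t) * F t (ta t) else 0))
        = (∑ t ∈ Finset.Icc 1 m,
            (if lam ≤ p t then (1 - a (m+1-t)) * ta t + a (m+1-t) * F t (ta t) else 0))
          + ∑ t ∈ Finset.Icc 1 m,
            (if lam ≤ p t then γ' (m+2-t) * (F t (ta t) - ta t) else 0) := by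
      rw [← Finset.sum_add_distrib]
      apply Finset.sum_congr rfl
      intro t ht
      have htm : t ≤ m := (Finset.mem_Icc.mp ht).2
      have hA : a (m+2-t) = a (m+1-t) + γ' (m+2-t) := by
        rw [show m+2-t = (m+1-t)+1 from by omega, ha, ha,
          Finset.sum_Icc_succ_top (by omega : 1 ≤ m+1-t+1)]
      by_cases hp : lam ≤ p t <;> simp [hp, hA] <;> ring
    rw [hsum] at h2
    have hS3 : (∑ t ∈ Finset.Icc 1 m,
          (if lam ≤ p t then γ' (m+2-t) * (ta t - F t (ta t)) else 0))
        = - ∑ t ∈ Finset.Icc 1 m,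
            (if lam ≤ p t then γ' (m+2-t) * (F t (ta t) - ta t) else 0) := by
      rw [← Finset.sum_neg_distrib]
      apply Finset.sum_congr rfl
      intro t ht
      by_cases hp : lam ≤ p t <;> simp [hp] <;> ring
    rw [hS3]
    by_cases hp : lam ≤ p (m+1)
    · have hp' : ¬ p (m+1) < lam := not_lt.mpr hp
      simp only [hp, hp', if_true, if_false] at *
      rw [ha1] at h2
      linarith
    · have hp' : p (m+1) < lam := not_le.mp hp
      simp only [hp, hp', if_true, if_false] at *
      linarith
  intro t
  induction t using Nat.strong_induction_on with
  | _ t IH =>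
    intro ht
    rcases Nat.lt_or_ge t 2 with h | h
    · have : t = 1 := by omega
      subst this
      rw [hta 1 le_rfl, hba 1 le_rfl]
      simp
    · obtain ⟨m, rfl⟩ : ∃ m, t = m+2 := ⟨t-2, by omega⟩
      rw [key m, hba (m+2) (by omega)]
      simp only [show m+2-1 = m+1 from rfl]
      have e : ∀ t ∈ Finset.Icc 1 (m+1),
          (if lam ≤ p t then γ' (m+2-t) * (ta t - F t (ta t)) else 0)
          = (if lam ≤ p t then γ' (m+2-t) * (ba t - F t (ba t)) else 0) := by
        intro t ht
        have h' := Finset.mem_Icc.mp ht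
        rw [IH t (by omega) h'.1]
      rw [Finset.sum_congr rfl e, IH (m+1) (by omega) (by omega)]
      have h2 : (2:ℕ) ≤ m+2 := by omega
      simp [h2]
end

section
/- Let $\lambda \in [0,1)$ and let $(\alpha_t)_{t\geq 1}$ be random critical values such that, almost surely, for all $T \geq 1$: $\alpha_T + \sum_{t=1}^{T-1}\mathbf{1}\{p_t \geq \lambda\}F_t(\alpha_t) \leq (1-\lambda)\alpha$. Assume for each $t \in \mathcal{H}_0$, $p_t$ is independent of $\alpha_t$ (or the $\alpha_t$ are deterministic), $\mathbb{P}(p_t \leq u) \leq F_t(u) \leq u$ for $u \in [0,1]$, and $F_t(\alpha_t) \geq 0$. Then for all $T \geq 1$, $\mathbb{P}(\exists t \leq T:\ t \in \mathcal{H}_0,\ p_t \leq \alpha_t) \leq \alpha$. -/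
open MeasureTheory Finset ProbabilityTheory
open scoped Classical
open scoped ENNReal

/-- Sufficient condition for online FWER control under super-uniformity. -/
theorem stmt7 {Ω : Type*} [MeasurableSpace Ω] (μ : Measure Ω) [IsProbabilityMeasure μ]
    (lam α : ℝ) (hlam : 0 ≤ lam ∧ lam < 1)
    (p : ℕ → Ω → ℝ) (H0 : Set ℕ)
    (a : ℕ → Ω → ℝ) (F : ℕ → ℝ → ℝ)
    (hp : ∀ t, Measurable (p t)) (ha : ∀ t, Measurable (a t))
    (hrange : ∀ t ω, a t ω ∈ Set.Icc (0:ℝ) 1)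
    (hwealth : ∀ᵐ ω ∂μ, ∀ T, 1 ≤ T →
      a T ω + (∑ t ∈ Finset.Icc 1 (T-1), if lam ≤ p t ω then F t (a t ω) else 0)
        ≤ (1 - lam) * α)
    (hind : ∀ t ∈ H0, IndepFun (p t) (a t) μ)
    (hsup : ∀ t ∈ H0, ∀ u ∈ Set.Icc (0:ℝ) 1,
      μ {ω | p t ω ≤ u} ≤ ENNReal.ofReal (F t u) ∧ F t u ≤ u)
    (hF0 : ∀ t ω, 0 ≤ F t (a t ω))
    (T : ℕ) (hT : 1 ≤ T) :
    μ {ω | ∃ t ∈ Finset.Icc 1 T, t ∈ H0 ∧ p t ω ≤ a t ω} ≤ ENNReal.ofReal α := by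
  obtain ⟨hlam0, hlam1⟩ := hlam
  have h1lam : (0:ℝ) < 1 - lam := by linarith
  -- α is nonnegative
  have hαnn : 0 ≤ α := by
    haveI : (MeasureTheory.ae μ).NeBot := ae_neBot.mpr (IsProbabilityMeasure.ne_zero μ)
    obtain ⟨ω, hω⟩ := hwealth.exists
    have h1 := hω 1 le_rfl
    have hIcc : Finset.Icc 1 0 = (∅ : Finset ℕ) := by decide
    rw [hIcc, Finset.sum_empty, add_zero] at h1
    have h2 := (hrange 1 ω).1
    nlinarith
  set c : ℝ≥0∞ := ENNReal.ofReal (1 - lam) with hcdef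
  have hc0 : c ≠ 0 := by
    simp only [hcdef, ne_eq, ENNReal.ofReal_eq_zero, not_le]
    exact h1lam
  have hctop : c ≠ ⊤ := ENNReal.ofReal_ne_top
  set s : Finset ℕ := (Finset.Icc 1 T).filter (fun t => t ∈ H0) with hsdef
  -- key per-test bound
  have key : ∀ t ∈ s, c * μ {ω | p t ω ≤ a t ω}
      ≤ ∫⁻ ω, ENNReal.ofReal (if lam ≤ p t ω then F t (a t ω) else 0) ∂μ := by
    intro t hts
    have htH : t ∈ H0 := (Finset.mem_filter.mp hts).2
    set G : ℝ → ℝ≥0∞ := fun y => μ.map (p t) (Set.Iic y) with hGdef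
    have hGmono : Monotone G := fun y z hyz => measure_mono (Set.Iic_subset_Iic.mpr hyz)
    have hGmeas : Measurable G := hGmono.measurable
    have hmap : μ.map (fun ω => (p t ω, a t ω)) = (μ.map (p t)).prod (μ.map (a t)) :=
      (indepFun_iff_map_prod_eq_prod_map_map (hp t).aemeasurable (ha t).aemeasurable).mp
        (hind t htH)
    have hsle : MeasurableSet {q : ℝ × ℝ | q.1 ≤ q.2} :=
      measurableSet_le measurable_fst measurable_snd
    -- Step 1: express the rejection probability via the law of p t.
    have step1 : μ {ω | p t ω ≤ a t ω} = ∫⁻ ω, G (a t ω) ∂μ := by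
      have h0 : μ {ω | p t ω ≤ a t ω}
          = μ.map (fun ω => (p t ω, a t ω)) {q : ℝ × ℝ | q.1 ≤ q.2} := by
        rw [Measure.map_apply ((hp t).prodMk (ha t)) hsle]
        rfl
      rw [h0, hmap, Measure.prod_apply_symm hsle]
      have hpre : ∀ y : ℝ, ((fun x => (x, y)) ⁻¹' {q : ℝ × ℝ | q.1 ≤ q.2}) = Set.Iic y :=
        fun y => rfl
      rw [← lintegral_map hGmeas (ha t)]
      rfl
    -- Step 2: c ≤ μ {lam ≤ p t}
    have hlamIcc : lam ∈ Set.Icc (0:ℝ) 1 := ⟨hlam0, le_of_lt hlam1⟩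
    have hFlam := hsup t htH lam hlamIcc
    have hps : μ {ω | p t ω ≤ lam} ≤ ENNReal.ofReal lam :=
      le_trans hFlam.1 (ENNReal.ofReal_le_ofReal hFlam.2)
    have step2 : c ≤ μ {ω | lam ≤ p t ω} := by
      have hmlt : MeasurableSet {ω | p t ω < lam} := (hp t) measurableSet_Iio
      have hsub : {ω | p t ω < lam} ⊆ {ω | p t ω ≤ lam} := by
        intro ω h
        have h' : p t ω < lam := h
        exact le_of_lt h'
      have hle : μ {ω | p t ω < lam} ≤ ENNReal.ofReal lam :=
        le_trans (measure_mono hsub) hps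
      calc c = 1 - ENNReal.ofReal lam := by
              rw [hcdef, ENNReal.ofReal_sub 1 hlam0, ENNReal.ofReal_one]
        _ ≤ 1 - μ {ω | p t ω < lam} := tsub_le_tsub_left hle 1
        _ = μ {ω | p t ω < lam}ᶜ := (prob_compl_eq_one_sub hmlt).symm
        _ = μ {ω | lam ≤ p t ω} := by
              congr 1
              ext ω
              simp [not_lt]
    -- Step 3: factorization via independence
    set f' : Ω → ℝ≥0∞ := fun ω => (Set.Ici lam).indicator (fun _ => (1:ℝ≥0∞)) (p t ω)
      with hf'def
    have hφ : Measurable ((Set.Ici lam).indicator (fun _ => (1:ℝ≥0∞))) :=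
      measurable_const.indicator measurableSet_Ici
    have hf'meas : Measurable f' := hφ.comp (hp t)
    have hg'meas : Measurable (fun ω => G (a t ω)) := hGmeas.comp (ha t)
    have hindep : IndepFun f' (fun ω => G (a t ω)) μ := (hind t htH).comp hφ hGmeas
    have hfact : ∫⁻ ω, (f' * fun ω => G (a t ω)) ω ∂μ
        = (∫⁻ ω, f' ω ∂μ) * ∫⁻ ω, G (a t ω) ∂μ :=
      lintegral_mul_eq_lintegral_mul_lintegral_of_indepFun hf'meas hg'meas hindep
    have hf'int : ∫⁻ ω, f' ω ∂μ = μ {ω | lam ≤ p t ω} := by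
      have h1 : ∀ ω, f' ω = Set.indicator (p t ⁻¹' Set.Ici lam) (fun _ => (1:ℝ≥0∞)) ω := by
        intro ω
        simp [hf'def, Set.indicator_apply]
      simp_rw [h1]
      rw [lintegral_indicator ((hp t) measurableSet_Ici)]
      simp only [setLIntegral_const, one_mul]
      rfl
    calc c * μ {ω | p t ω ≤ a t ω}
        = c * ∫⁻ ω, G (a t ω) ∂μ := by rw [step1]
      _ ≤ μ {ω | lam ≤ p t ω} * ∫⁻ ω, G (a t ω) ∂μ := mul_le_mul_left step2 _
      _ = ∫⁻ ω, (f' * fun ω => G (a t ω)) ω ∂μ := by rw [hfact, hf'int]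
      _ ≤ ∫⁻ ω, ENNReal.ofReal (if lam ≤ p t ω then F t (a t ω) else 0) ∂μ := by
          apply lintegral_mono
          intro ω
          by_cases h : lam ≤ p t ω
          · have hb := (hsup t htH (a t ω) (hrange t ω)).1
            have hmap2 : (Measure.map (p t) μ) (Set.Iic (a t ω)) = μ {ω' | p t ω' ≤ a t ω} := by
              rw [Measure.map_apply (hp t) measurableSet_Iic]
              rfl
            have hG : G (a t ω) ≤ ENNReal.ofReal (F t (a t ω)) := by
              show (Measure.map (p t) μ) (Set.Iic (a t ω)) ≤ _
              rw [hmap2]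
              exact hb
            simpa [hf'def, Set.indicator_apply, Set.mem_Ici, h] using hG
          · simp [hf'def, Set.indicator_apply, Set.mem_Ici, h]
  -- Superadditivity of the lower integral over finite sums
  have hsum_le : ∀ (s' : Finset ℕ) (f : ℕ → Ω → ℝ≥0∞),
      (∑ t ∈ s', ∫⁻ ω, f t ω ∂μ) ≤ ∫⁻ ω, ∑ t ∈ s', f t ω ∂μ := by
    intro s' f
    induction s' using Finset.induction with
    | empty => simp
    | @insert i s'' hnotmem ih =>
        rw [Finset.sum_insert hnotmem]
        refine le_trans (add_le_add_right ih _) ?_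
        refine le_trans (le_lintegral_add _ _) ?_
        apply lintegral_mono
        intro ω
        simp [Finset.sum_insert hnotmem]
  -- a.e. pointwise bound from the wealth condition
  have hae : ∀ᵐ ω ∂μ,
      (∑ t ∈ s, ENNReal.ofReal (if lam ≤ p t ω then F t (a t ω) else 0))
        ≤ ENNReal.ofReal ((1 - lam) * α) := by
    filter_upwards [hwealth] with ω hω
    have hw := hω (T + 1) (by omega)
    simp only [Nat.add_sub_cancel] at hw
    have hnn : ∀ t, 0 ≤ (if lam ≤ p t ω then F t (a t ω) else 0) := by
      intro t
      split
      · exact hF0 t ω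
      · exact le_rfl
    rw [← ENNReal.ofReal_sum_of_nonneg (fun t _ => hnn t)]
    apply ENNReal.ofReal_le_ofReal
    have h2 : (∑ t ∈ s, if lam ≤ p t ω then F t (a t ω) else 0)
        ≤ ∑ t ∈ Finset.Icc 1 T, if lam ≤ p t ω then F t (a t ω) else 0 :=
      Finset.sum_le_sum_of_subset_of_nonneg (Finset.filter_subset _ _) (fun t _ _ => hnn t)
    have h3 := (hrange (T+1) ω).1
    linarith
  -- union bound and conclusion
  have hset : {ω | ∃ t ∈ Finset.Icc 1 T, t ∈ H0 ∧ p t ω ≤ a t ω}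
      = ⋃ t ∈ s, {ω | p t ω ≤ a t ω} := by
    ext ω
    simp only [Set.mem_setOf_eq, Set.mem_iUnion, hsdef, Finset.mem_filter, exists_prop]
    tauto
  rw [hset]
  have hub : μ (⋃ t ∈ s, {ω | p t ω ≤ a t ω}) ≤ ∑ t ∈ s, μ {ω | p t ω ≤ a t ω} :=
    measure_biUnion_finset_le s _
  have hmain : c * μ (⋃ t ∈ s, {ω | p t ω ≤ a t ω}) ≤ c * ENNReal.ofReal α := by
    calc c * μ (⋃ t ∈ s, {ω | p t ω ≤ a t ω})
        ≤ c * ∑ t ∈ s, μ {ω | p t ω ≤ a t ω} := mul_le_mul_right hub c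
      _ = ∑ t ∈ s, c * μ {ω | p t ω ≤ a t ω} := Finset.mul_sum _ _ _
      _ ≤ ∑ t ∈ s, ∫⁻ ω, ENNReal.ofReal (if lam ≤ p t ω then F t (a t ω) else 0) ∂μ :=
          Finset.sum_le_sum key
      _ ≤ ∫⁻ ω, ∑ t ∈ s, ENNReal.ofReal (if lam ≤ p t ω then F t (a t ω) else 0) ∂μ :=
          hsum_le s _
      _ ≤ ENNReal.ofReal ((1 - lam) * α) := by
          refine le_trans (lintegral_mono_ae hae) ?_
          simp [lintegral_const]
      _ = c * ENNReal.ofReal α := by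
          rw [hcdef, ← ENNReal.ofReal_mul (le_of_lt h1lam)]
  exact (ENNReal.mul_le_mul_iff_right hc0 hctop).mp hmain
end

section
/- Let $\lambda \in [0,1)$, let $(\alpha^0_t)_{t\geq 1}$ be nonnegative and satisfy, almost surely, $\alpha^0_T + \sum_{1\leq t\leq T-1,\, p_t \geq \lambda}\alpha^0_t \leq (1-\lambda)\alpha$ for all $T$. Let $(\gamma'_t)$ be a nonnegative sequence with $\sum_{t\geq 1}\gamma'_t \leq 1$ and define $(\alpha_t)$ by $\alpha_T = \alpha^0_T + \sum_{1\leq t\leq T-1,\,p_t\geq\lambda}\gamma'_{T-t}(\alpha_t - F_t(\alpha_t)) + \mathbf{1}\{p_{T-1} < \lambda\}(\alpha_{T-1} - \alpha^0_{T-1})$. If $F_t(u) \leq u$ for all $u$ and $t$, then almost surely, for all $T \geq 1$: $\alpha_T + \sum_{t=1}^{T-1}\mathbf{1}\{p_t \geq \lambda\}F_t(\alpha_t) \leq (1-\lambda)\alpha$. -/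
open Finset

/-- Core deterministic inequality of the general rewarded-FWER theorem: the rewarded
critical values satisfy the sufficient FWER wealth condition. -/
theorem stmt8 (lam α : ℝ) (hlam : 0 ≤ lam ∧ lam < 1)
    (α0 : ℕ → ℝ) (hα0 : ∀ t, 0 ≤ α0 t)
    (p : ℕ → ℝ)
    (hα0wealth : ∀ T, 1 ≤ T →
      α0 T + (∑ t ∈ Finset.Icc 1 (T-1), if lam ≤ p t then α0 t else 0) ≤ (1 - lam) * α)
    (γ' : ℕ → ℝ) (hγ' : ∀ t, 0 ≤ γ' t)
    (hγ'sum : ∀ T : ℕ, ∑ t ∈ Finset.Icc 1 T, γ' t ≤ 1)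
    (F : ℕ → ℝ → ℝ) (hF : ∀ t u, F t u ≤ u)
    (a : ℕ → ℝ)
    (ha : ∀ T, 1 ≤ T → a T = α0 T
      + (∑ t ∈ Finset.Icc 1 (T-1), if lam ≤ p t then γ' (T-t) * (a t - F t (a t)) else 0)
      + (if 2 ≤ T ∧ p (T-1) < lam then a (T-1) - α0 (T-1) else 0)) :
    ∀ T, 1 ≤ T →
      a T + (∑ t ∈ Finset.Icc 1 (T-1), if lam ≤ p t then F t (a t) else 0)
        ≤ (1 - lam) * α := by
  set S : ℕ → ℝ := fun n => ∑ u ∈ Finset.Icc 1 n, γ' u with hS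
  have hS1 : S 1 = γ' 1 := by simp [hS]
  have hSsucc : ∀ m : ℕ, S (m+1) = S m + γ' (m+1) := by
    intro m
    simp [hS, Finset.sum_Icc_succ_top (by omega : 1 ≤ m+1)]
  have key : ∀ n : ℕ, a (n+1)
      + (∑ t ∈ Finset.Icc 1 n, if lam ≤ p t then
          (1 - S (n+1-t)) * a t + S (n+1-t) * F t (a t) else 0)
      = α0 (n+1) + ∑ t ∈ Finset.Icc 1 n, (if lam ≤ p t then α0 t else 0) := by
    intro n
    induction n with
    | zero =>
        have h1 := ha 1 le_rfl
        simp at h1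
        simp [h1]
    | succ n ih =>
        have hA := ha (n+2) (by omega)
        have h2 : (n+2) - 1 = n + 1 := rfl
        rw [h2] at hA
        rw [Finset.sum_Icc_succ_top (by omega : 1 ≤ n+1)] at hA
        rw [Finset.sum_Icc_succ_top (by omega : 1 ≤ n+1),
            Finset.sum_Icc_succ_top (by omega : 1 ≤ n+1)]
        have hsum : ∀ t ∈ Finset.Icc 1 n,
            (if lam ≤ p t then (1 - S (n+2-t)) * a t + S (n+2-t) * F t (a t) else 0)
            = (if lam ≤ p t then (1 - S (n+1-t)) * a t + S (n+1-t) * F t (a t) else 0)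
              - (if lam ≤ p t then γ' (n+2-t) * (a t - F t (a t)) else 0) := by
          intro t ht
          simp only [Finset.mem_Icc] at ht
          have e1 : n + 2 - t = (n+1-t) + 1 := by omega
          by_cases hq : lam ≤ p t
          · simp only [hq, if_true, e1, hSsucc (n+1-t)]
            ring
          · simp [hq]
        rw [Finset.sum_congr rfl hsum, Finset.sum_sub_distrib]
        have e2 : n + 2 - (n+1) = 1 := by omega
        rw [e2] at hA
        rw [show n + 1 + 1 - (n+1) = 1 from by omega]
        by_cases hp : lam ≤ p (n+1)
        · have h3 : ¬ (2 ≤ n + 2 ∧ p (n+1) < lam) := fun h => absurd h.2 (not_lt.mpr hp)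
          simp only [hp, h3, if_true, if_false, add_zero] at hA ⊢
          rw [hS1]
          linear_combination hA + ih
        · have h3 : 2 ≤ n + 2 ∧ p (n+1) < lam := ⟨by omega, lt_of_not_ge hp⟩
          simp only [hp, h3.1, h3.2, and_self, if_true, if_false, add_zero] at hA ⊢
          linear_combination hA + ih
  intro T hT
  obtain ⟨n, rfl⟩ : ∃ n, T = n + 1 := ⟨T - 1, by omega⟩
  have h2 : (n+1) - 1 = n := rfl
  rw [h2]
  have hcmp : (∑ t ∈ Finset.Icc 1 n, if lam ≤ p t then F t (a t) else 0)
      ≤ ∑ t ∈ Finset.Icc 1 n, (if lam ≤ p t then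
          (1 - S (n+1-t)) * a t + S (n+1-t) * F t (a t) else 0) := by
    apply Finset.sum_le_sum
    intro t ht
    by_cases hq : lam ≤ p t
    · rw [if_pos hq, if_pos hq]
      have h1 : S (n+1-t) ≤ 1 := hγ'sum (n+1-t)
      nlinarith [mul_le_mul_of_nonneg_left (hF t (a t))
        (by linarith : (0:ℝ) ≤ 1 - S (n+1-t))]
    · simp [hq]
  have := hα0wealth (n+1) (by omega)
  rw [h2] at this
  linarith [key n]
end

section
/- Let $(\gamma_t)_{t\geq 1}$ be a nonnegative sequence with $\sum_{t\geq1}\gamma_t \leq 1$, extended by $\gamma_t = 0$ for $t \leq 0$. Let $0 < W_0 < \alpha$, and let $\tau_1 < \tau_2 < \cdots$ be the (possibly infinite) rejection times with $\tau_j \leq T-1$ if and only if $R(T-1) \geq j$, where $R(s)$ denotes the number of rejections up to time $s$. Define $\alpha^{LORD}_t = W_0\gamma_t + (\alpha - W_0)\gamma_{t-\tau_1} + \alpha\sum_{j\geq 2}\gamma_{t-\tau_j}$. Then for all $T \geq 1$: $\sum_{t=1}^{T}\alpha^{LORD}_t \leq \alpha\,(1 + \max(0, R(T-1)-1)) \leq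 \alpha\,\max(1, R(T))$. -/
open Finset

/-- `shiftγ γ t τ` encodes `γ (t - τ)` with the convention that it vanishes
when `τ = ∞` or `t - τ ≤ 0` (assuming `γ 0 = 0`). -/
noncomputable def shiftγ (γ : ℕ → ℝ) (t : ℕ) (τ : ℕ∞) : ℝ :=
  if τ ≤ (t : ℕ∞) then γ (t - τ.toNat) else 0

-- auxiliary lemmas
lemma shiftγ_nonneg (γ : ℕ → ℝ) (hγ : ∀ t, 0 ≤ γ t) (t : ℕ) (τ : ℕ∞) :
    0 ≤ shiftγ γ t τ := by
  unfold shiftγ; split <;> simp [hγ]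

lemma sum_shift (γ : ℕ → ℝ) (n T : ℕ) :
    ∑ t ∈ Icc (n+1) T, γ (t - n) = ∑ s ∈ Icc 1 (T - n), γ s := by
  apply Finset.sum_nbij' (fun t => t - n) (fun s => s + n) <;> intros <;>
    simp_all [Finset.mem_Icc] <;> omega

lemma sumA (γ : ℕ → ℝ) (hγ : ∀ t, 0 ≤ γ t) (hγ0 : γ 0 = 0)
    (hγsum : ∀ T : ℕ, ∑ t ∈ Finset.Icc 1 T, γ t ≤ 1)
    (T : ℕ) (hT : 1 ≤ T) (τ : ℕ∞) :
    ∑ t ∈ Icc 1 T, shiftγ γ t τ ≤ if τ ≤ ((T-1 : ℕ) : ℕ∞) then 1 else 0 := by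
  induction τ using ENat.recTopCoe with
  | top =>
    simp only [shiftγ]
    have : ∀ t ∈ Icc 1 T, (if (⊤ : ℕ∞) ≤ (t : ℕ∞) then γ (t - (⊤:ℕ∞).toNat) else 0) = 0 := by
      intro t _; simp
    rw [Finset.sum_congr rfl this]
    simp
  | coe n =>
    have h1 : ∀ t ∈ Icc 1 T, shiftγ γ t (n : ℕ∞) = if n + 1 ≤ t then γ (t - n) else 0 := by
      intro t _
      simp only [shiftγ, Nat.cast_le, ENat.toNat_coe]
      rcases lt_trichotomy t n with h | h | h
      · rw [if_neg (by omega), if_neg (by omega)]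
      · subst h; simp [hγ0]
      · rw [if_pos (by omega), if_pos (by omega)]
    rw [Finset.sum_congr rfl h1, ← Finset.sum_filter]
    have h2 : (Icc 1 T).filter (fun t => n + 1 ≤ t) = Icc (n+1) T := by
      ext t; simp [Finset.mem_Icc]; omega
    rw [h2, sum_shift]
    by_cases hn : (n : ℕ∞) ≤ ((T-1 : ℕ) : ℕ∞)
    · rw [if_pos hn]; exact hγsum _
    · rw [if_neg hn]
      have : T - n = 0 := by
        rw [Nat.cast_le] at hn; omega
      rw [this]; simp

/-- Wealth bound for the LORD procedure. -/
theorem stmt9 (γ : ℕ → ℝ) (hγ : ∀ t, 0 ≤ γ t) (hγ0 : γ 0 = 0)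
    (hγsum : ∀ T : ℕ, ∑ t ∈ Finset.Icc 1 T, γ t ≤ 1)
    (α W0 : ℝ) (hW0 : 0 < W0 ∧ W0 < α)
    (R : ℕ → ℕ) (hR0 : R 0 = 0) (hRmono : Monotone R)
    (τ : ℕ → ℕ∞) (hτinc : ∀ j, τ j < τ (j+1) ∨ τ j = ⊤)
    (hτR : ∀ j, 1 ≤ j → ∀ s : ℕ, (τ j ≤ (s : ℕ∞) ↔ j ≤ R s))
    (aL : ℕ → ℝ)
    (haL : ∀ t, aL t = W0 * γ t + (α - W0) * shiftγ γ t (τ 1)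
      + α * ∑' j : ℕ, (if 2 ≤ j then shiftγ γ t (τ j) else 0))
    (T : ℕ) (hT : 1 ≤ T) :
    (∑ t ∈ Finset.Icc 1 T, aL t) ≤ α * (1 + max 0 ((R (T-1) : ℝ) - 1)) ∧
    α * (1 + max 0 ((R (T-1) : ℝ) - 1)) ≤ α * max 1 (R T : ℝ) := by
  obtain ⟨hW0pos, hW0α⟩ := hW0
  have hα : 0 < α := hW0pos.trans hW0α
  set N := R T with hN
  set M := R (T-1) with hM
  have hMN : M ≤ N := hRmono (by omega)
  -- rewrite the tsum as a finite sum
  have htsum : ∀ t ∈ Icc 1 T,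
      (∑' j : ℕ, (if 2 ≤ j then shiftγ γ t (τ j) else 0))
        = ∑ j ∈ Icc 2 N, shiftγ γ t (τ j) := by
    intro t ht
    rw [Finset.mem_Icc] at ht
    have hz : ∀ j ∉ Icc 2 N, (if 2 ≤ j then shiftγ γ t (τ j) else 0) = 0 := by
      intro j hj
      rw [Finset.mem_Icc] at hj
      by_cases h2 : 2 ≤ j
      · rw [if_pos h2]
        have hNj : N < j := by omega
        unfold shiftγ
        rw [if_neg]
        intro hc
        have := (hτR j (by omega) t).mp hc
        have := hRmono ht.2
        omega
      · rw [if_neg h2]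
    rw [tsum_eq_sum hz]
    exact Finset.sum_congr rfl fun j hj => by
      rw [Finset.mem_Icc] at hj; rw [if_pos (by omega)]
  -- main bound pieces
  have hS0 : ∑ t ∈ Icc 1 T, γ t ≤ 1 := hγsum T
  have hS1 : ∑ t ∈ Icc 1 T, shiftγ γ t (τ 1) ≤ if τ 1 ≤ ((T-1:ℕ) : ℕ∞) then 1 else 0 :=
    sumA γ hγ hγ0 hγsum T hT (τ 1)
  have hSj : ∀ j ∈ Icc 2 N,
      ∑ t ∈ Icc 1 T, shiftγ γ t (τ j) ≤ if j ≤ M then (1:ℝ) else 0 := by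
    intro j hj
    rw [Finset.mem_Icc] at hj
    have hb := sumA γ hγ hγ0 hγsum T hT (τ j)
    have hiff := hτR j (by omega) (T-1)
    refine hb.trans ?_
    split_ifs with h1 h2 h2 <;> first | exact absurd (hiff.mp h1) h2 | norm_num
  -- counting
  have hcount : ∑ j ∈ Icc 2 N, (if j ≤ M then (1:ℝ) else 0) = max 0 ((M : ℝ) - 1) := by
    rw [← Finset.sum_filter]
    have hf : (Icc 2 N).filter (fun j => j ≤ M) = Icc 2 M := by
      ext j; simp [Finset.mem_Icc]; omega
    rw [hf, Finset.sum_const, Nat.card_Icc, nsmul_eq_mul, mul_one]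
    rcases le_or_gt M 1 with h | h
    · interval_cases M <;> norm_num
    · have : (M + 1 - 2 : ℕ) = M - 1 := by omega
      rw [this, Nat.cast_sub (by omega), Nat.cast_one]
      rw [max_eq_right]
      have : (1:ℝ) ≤ (M:ℝ) := by exact_mod_cast h.le
      linarith
  -- assemble
  have hsum : ∑ t ∈ Icc 1 T, aL t
      = W0 * ∑ t ∈ Icc 1 T, γ t
        + (α - W0) * ∑ t ∈ Icc 1 T, shiftγ γ t (τ 1)
        + α * ∑ j ∈ Icc 2 N, ∑ t ∈ Icc 1 T, shiftγ γ t (τ j) := by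
    have e1 : ∀ t ∈ Icc 1 T, aL t = W0 * γ t + (α - W0) * shiftγ γ t (τ 1)
        + α * ∑ j ∈ Icc 2 N, shiftγ γ t (τ j) := fun t ht => by rw [haL t, htsum t ht]
    rw [Finset.sum_congr rfl e1, Finset.sum_add_distrib, Finset.sum_add_distrib,
      ← Finset.mul_sum, ← Finset.mul_sum, ← Finset.mul_sum, Finset.sum_comm]
  constructor
  · rw [hsum]
    have h3 : α * ∑ j ∈ Icc 2 N, ∑ t ∈ Icc 1 T, shiftγ γ t (τ j)
        ≤ α * max 0 ((M : ℝ) - 1) := by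
      rw [← hcount]
      exact mul_le_mul_of_nonneg_left (Finset.sum_le_sum hSj) hα.le
    have h1 : W0 * ∑ t ∈ Icc 1 T, γ t ≤ W0 := by
      nlinarith [Finset.sum_nonneg (fun t (_ : t ∈ Icc 1 T) => hγ t)]
    have h2 : (α - W0) * ∑ t ∈ Icc 1 T, shiftγ γ t (τ 1)
        ≤ (α - W0) * (if τ 1 ≤ ((T-1:ℕ) : ℕ∞) then 1 else 0) :=
      mul_le_mul_of_nonneg_left hS1 (by linarith)
    have h12 : W0 + (α - W0) * (if τ 1 ≤ ((T-1:ℕ) : ℕ∞) then 1 else 0) ≤ α := by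
      split <;> nlinarith
    rw [mul_add, mul_one]
    linarith
  · have key : (1:ℝ) + max 0 ((M : ℝ) - 1) = max 1 (M : ℝ) := by
      rw [← max_add_add_left]; norm_num
    rw [key]
    apply mul_le_mul_of_nonneg_left _ hα.le
    exact max_le_max le_rfl (by exact_mod_cast hRmono (by omega : T - 1 ≤ T))
end

section
/- Let $\lambda \in [0,1)$ and suppose $(\alpha_t)_{t\geq 1}$ are random critical values satisfying, almost surely for all $T \geq 1$: $\alpha_T + \sum_{1\leq t\leq T-1,\,p_t\geq\lambda}F_t(\alpha_t) \leq (1-\lambda)\,\alpha\,\max(1, R(T))$, where $R(T) = \sum_{t=1}^T\mathbf{1}\{p_t \leq \alpha_t\}$. Assume for each $t \in \mathcal{H}_0$, $p_t$ is independent of $\alpha_t$, $\mathbb{P}(p_t \leq u) \leq F_t(u) \leq u$ for $u \in [0,1]$, and $F_t(\alpha_t) \geq 0$. Then for all $T \geq 1$: $\mathbb{E}\big(\sum_{t=1}^T\mathbf{1}\{t\in\mathcal{H}_0,\ p_t\leq\alpha_t\}\big) \leq \alpha\,\mathbb{E}\big(\max(1, R(T))\big)$, i.e. the marginal FDR at time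 $T$ is at most $\alpha$. -/
open MeasureTheory Finset ProbabilityTheory
open scoped Classical

lemma finset_sum_lintegral_le' {Ω : Type*} [MeasurableSpace Ω] (μ : Measure Ω)
    (s : Finset ℕ) (f : ℕ → Ω → ENNReal) :
    ∑ t ∈ s, ∫⁻ ω, f t ω ∂μ ≤ ∫⁻ ω, ∑ t ∈ s, f t ω ∂μ := by
  classical
  induction s using Finset.induction_on with
  | empty => simp
  | insert b s' hnotmem ih =>
      rw [Finset.sum_insert hnotmem]
      simp_rw [Finset.sum_insert hnotmem]
      calc ∫⁻ ω, f b ω ∂μ + ∑ t ∈ s', ∫⁻ ω, f t ω ∂μ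
          ≤ ∫⁻ ω, f b ω ∂μ + ∫⁻ ω, ∑ t ∈ s', f t ω ∂μ := by gcongr
        _ ≤ ∫⁻ ω, (f b ω + ∑ t ∈ s', f t ω) ∂μ := le_lintegral_add _ _

/-- Sufficient condition for online mFDR control under super-uniformity. -/
theorem stmt10 {Ω : Type*} [MeasurableSpace Ω] (μ : Measure Ω) [IsProbabilityMeasure μ]
    (lam α : ℝ) (hlam : 0 ≤ lam ∧ lam < 1)
    (p : ℕ → Ω → ℝ) (H0 : Set ℕ)
    (a : ℕ → Ω → ℝ) (F : ℕ → ℝ → ℝ)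
    (hp : ∀ t, Measurable (p t)) (ha : ∀ t, Measurable (a t))
    (hrange : ∀ t ω, a t ω ∈ Set.Icc (0:ℝ) 1)
    (R : ℕ → Ω → ℝ)
    (hR : ∀ T ω, R T ω = ∑ t ∈ Finset.Icc 1 T, if p t ω ≤ a t ω then (1:ℝ) else 0)
    (hwealth : ∀ᵐ ω ∂μ, ∀ T, 1 ≤ T →
      a T ω + (∑ t ∈ Finset.Icc 1 (T-1), if lam ≤ p t ω then F t (a t ω) else 0)
        ≤ (1 - lam) * α * max 1 (R T ω))
    (hind : ∀ t ∈ H0, IndepFun (p t) (a t) μ)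
    (hsup : ∀ t ∈ H0, ∀ u ∈ Set.Icc (0:ℝ) 1,
      μ {ω | p t ω ≤ u} ≤ ENNReal.ofReal (F t u) ∧ F t u ≤ u)
    (hF0 : ∀ t ω, 0 ≤ F t (a t ω))
    (T : ℕ) (hT : 1 ≤ T) :
    ∫ ω, (∑ t ∈ Finset.Icc 1 T, if t ∈ H0 ∧ p t ω ≤ a t ω then (1:ℝ) else 0) ∂μ
      ≤ α * ∫ ω, max 1 (R T ω) ∂μ := by
  obtain ⟨hlam0, hlam1⟩ := hlam
  have hlampos : (0:ℝ) < 1 - lam := by linarith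
  -- α is nonnegative
  have hα : 0 ≤ α := by
    have hne : μ ≠ 0 := IsProbabilityMeasure.ne_zero μ
    haveI : (MeasureTheory.ae μ).NeBot := ae_neBot.mpr hne
    obtain ⟨ω, hw⟩ := hwealth.exists
    have h1 := hw T hT
    have hsum0 : 0 ≤ ∑ t ∈ Finset.Icc 1 (T-1), if lam ≤ p t ω then F t (a t ω) else 0 := by
      apply Finset.sum_nonneg
      intro t _
      by_cases h : lam ≤ p t ω <;> simp [h, hF0 t ω]
    have ha0 : 0 ≤ a T ω := (hrange T ω).1
    have hM : (1:ℝ) ≤ max 1 (R T ω) := le_max_left _ _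
    have hnn : 0 ≤ (1 - lam) * α * max 1 (R T ω) := le_trans (add_nonneg ha0 hsum0) h1
    by_contra hneg
    push_neg at hneg
    have h2 : (1 - lam) * α < 0 := mul_neg_of_pos_of_neg hlampos hneg
    have h3 : (1 - lam) * α * max 1 (R T ω) < 0 :=
      mul_neg_of_neg_of_pos h2 (lt_of_lt_of_le one_pos hM)
    linarith
  -- the null sets
  set S : ℕ → Set Ω := fun t => {ω | t ∈ H0 ∧ p t ω ≤ a t ω} with hS
  have hSmeas : ∀ t, MeasurableSet (S t) := by
    intro t
    by_cases ht : t ∈ H0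
    · have : S t = {ω | p t ω ≤ a t ω} := by ext ω; simp [hS, ht]
      rw [this]; exact measurableSet_le (hp t) (ha t)
    · have : S t = ∅ := by ext ω; simp [hS, ht]
      rw [this]; exact MeasurableSet.empty
  -- the ENNReal weight functions
  set W : ℕ → Ω → ENNReal := fun t ω =>
    if t ∈ H0 then (if lam ≤ p t ω then ENNReal.ofReal (F t (a t ω)) else 0) else 0 with hW
  -- Key per-time bound
  have keyA : ∀ t, ENNReal.ofReal (1 - lam) * μ (S t) ≤ ∫⁻ ω, W t ω ∂μ := by
    intro t
    by_cases ht : t ∈ H0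
    swap
    · have : S t = ∅ := by ext ω; simp [hS, ht]
      simp [this]
    have hSt : S t = {ω | p t ω ≤ a t ω} := by ext ω; simp [hS, ht]
    have hWt : ∀ ω, W t ω = (if lam ≤ p t ω then ENNReal.ofReal (F t (a t ω)) else 0) := by
      intro ω; simp [hW, ht]
    set X := p t with hX
    set Y := a t with hY
    -- cdf-type function
    set hfun : ℝ → ENNReal := fun u => (μ.map X) (Set.Iic u) with hhfun
    have hh_mono : Monotone hfun := fun u v huv =>
      measure_mono (Set.Iic_subset_Iic.mpr huv)
    have hh_meas : Measurable hfun := hh_mono.measurable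
    have hjoint : Measure.map (fun ω => (X ω, Y ω)) μ = (μ.map X).prod (μ.map Y) :=
      (indepFun_iff_map_prod_eq_prod_map_map (hp t).aemeasurable (ha t).aemeasurable).mp
        (hind t ht)
    have hsost : MeasurableSet {q : ℝ × ℝ | q.1 ≤ q.2} :=
      measurableSet_le measurable_fst measurable_snd
    -- step 2: joint probability as integral of cdf
    have h2 : μ {ω | X ω ≤ Y ω} = ∫⁻ ω, hfun (Y ω) ∂μ := by
      have e1 : μ {ω | X ω ≤ Y ω}
          = Measure.map (fun ω => (X ω, Y ω)) μ {q : ℝ × ℝ | q.1 ≤ q.2} := by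
        rw [Measure.map_apply ((hp t).prodMk (ha t)) hsost]
        rfl
      rw [e1, hjoint, Measure.prod_apply_symm hsost]
      have e2 : ∀ y : ℝ, ((fun x => (x, y)) ⁻¹' {q : ℝ × ℝ | q.1 ≤ q.2}) = Set.Iic y := by
        intro y; ext x; simp
      simp_rw [e2]
      rw [lintegral_map hh_meas (ha t)]
    -- step 3: cdf dominated by F
    have h3 : ∀ ω, hfun (Y ω) ≤ ENNReal.ofReal (F t (Y ω)) := by
      intro ω
      have hu := hrange t ω
      have h := (hsup t ht (Y ω) hu).1
      have : hfun (Y ω) = μ {ω' | X ω' ≤ Y ω} := by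
        show (Measure.map X μ) (Set.Iic (Y ω)) = _
        rw [Measure.map_apply (hp t) measurableSet_Iic]; rfl
      rw [this]; exact h
    -- step 4: probability of exceeding lambda
    have h4 : ENNReal.ofReal (1 - lam) ≤ μ {ω | lam ≤ X ω} := by
      have hlt : μ {ω | X ω < lam} ≤ ENNReal.ofReal lam := by
        calc μ {ω | X ω < lam} ≤ μ {ω | X ω ≤ lam} :=
              measure_mono (Set.setOf_subset_setOf.mpr (fun _ => le_of_lt))
          _ ≤ ENNReal.ofReal (F t lam) :=
              (hsup t ht lam ⟨hlam0, le_of_lt hlam1⟩).1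
          _ ≤ ENNReal.ofReal lam :=
              ENNReal.ofReal_le_ofReal (hsup t ht lam ⟨hlam0, le_of_lt hlam1⟩).2
      have hce : {ω | lam ≤ X ω} = {ω | X ω < lam}ᶜ := by
        ext ω; simp [not_lt]
      rw [hce, measure_compl (measurableSet_lt (hp t) measurable_const) (measure_ne_top μ _),
        measure_univ]
      calc ENNReal.ofReal (1 - lam) = 1 - ENNReal.ofReal lam := by
            rw [ENNReal.ofReal_sub _ hlam0, ENNReal.ofReal_one]
        _ ≤ 1 - μ {ω | X ω < lam} := tsub_le_tsub_left hlt 1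
    -- step 5: independence factorization
    set f1 : ℝ → ENNReal := fun x => if lam ≤ x then 1 else 0 with hf1
    have hf1meas : Measurable f1 := by
      apply Measurable.ite _ measurable_const measurable_const
      exact measurableSet_le measurable_const measurable_id
    have hfind : IndepFun (f1 ∘ X) (hfun ∘ Y) μ :=
      (hind t ht).comp hf1meas hh_meas
    have h5 : ∫⁻ ω, f1 (X ω) * hfun (Y ω) ∂μ
        = μ {ω | lam ≤ X ω} * μ {ω | X ω ≤ Y ω} := by
      have := lintegral_mul_eq_lintegral_mul_lintegral_of_indepFun
        (hf1meas.comp (hp t)) (hh_meas.comp (ha t)) hfind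
      rw [show (∫⁻ ω, f1 (X ω) * hfun (Y ω) ∂μ)
          = ∫⁻ ω, ((f1 ∘ X) * (hfun ∘ Y)) ω ∂μ from rfl, this]
      congr 1
      · have : ∀ ω, (f1 ∘ X) ω = Set.indicator {ω' | lam ≤ X ω'} (fun _ => (1:ENNReal)) ω := by
          intro ω
          by_cases h : lam ≤ X ω <;> simp [hf1, h, Set.indicator_apply]
        refine (lintegral_congr this).trans ?_
        rw [lintegral_indicator (measurableSet_le measurable_const (hp t))]
        simp
        rfl
      · exact h2.symm
    -- step 6: pointwise bound
    have h6 : ∀ ω, f1 (X ω) * hfun (Y ω) ≤ W t ω := by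
      intro ω
      rw [hWt]
      by_cases h : lam ≤ X ω
      · simp only [hf1, h, if_true, one_mul]
        exact h3 ω
      · simp [hf1, h]
    calc ENNReal.ofReal (1 - lam) * μ (S t)
        = ENNReal.ofReal (1 - lam) * μ {ω | X ω ≤ Y ω} := by rw [hSt]
      _ ≤ μ {ω | lam ≤ X ω} * μ {ω | X ω ≤ Y ω} := by
          exact mul_le_mul_left h4 _
      _ = ∫⁻ ω, f1 (X ω) * hfun (Y ω) ∂μ := h5.symm
      _ ≤ ∫⁻ ω, W t ω ∂μ := lintegral_mono h6
  -- pointwise wealth bound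
  have stepC : ∀ᵐ ω ∂μ, ∑ t ∈ Finset.Icc 1 T, W t ω
      ≤ ENNReal.ofReal ((1 - lam) * α * max 1 (R T ω)) := by
    filter_upwards [hwealth] with ω hw
    set r : ℕ → ℝ := fun t => if lam ≤ p t ω then F t (a t ω) else 0 with hr
    set r' : ℕ → ℝ := fun t => if t ∈ H0 then r t else 0 with hr'
    have hrnn : ∀ t, 0 ≤ r t := by
      intro t; by_cases h : lam ≤ p t ω <;> simp [hr, h, hF0 t ω]
    have hr'nn : ∀ t, 0 ≤ r' t := by
      intro t; by_cases h : t ∈ H0 <;> simp [hr', h, hrnn t]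
    have hWr : ∀ t, W t ω = ENNReal.ofReal (r' t) := by
      intro t
      by_cases h : t ∈ H0 <;> by_cases h2 : lam ≤ p t ω <;>
        simp [hW, hr', hr, h, h2]
    simp_rw [hWr]
    rw [← ENNReal.ofReal_sum_of_nonneg (fun t _ => hr'nn t)]
    apply ENNReal.ofReal_le_ofReal
    -- real inequality
    have hTsplit : T = (T - 1) + 1 := (Nat.succ_pred_eq_of_pos hT).symm
    have hsum : ∑ t ∈ Finset.Icc 1 T, r' t
        = ∑ t ∈ Finset.Icc 1 (T-1), r' t + r' T := by
      conv_lhs => rw [hTsplit]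
      rw [Finset.sum_Icc_succ_top (by omega) r']
      rw [← hTsplit]
    rw [hsum]
    have hb1 : ∑ t ∈ Finset.Icc 1 (T-1), r' t ≤ ∑ t ∈ Finset.Icc 1 (T-1), r t := by
      apply Finset.sum_le_sum
      intro t _
      by_cases h : t ∈ H0 <;> simp [hr', h, hrnn t]
    have hb2 : r' T ≤ a T ω := by
      by_cases h : T ∈ H0
      · have hFa : r T ≤ F T (a T ω) := by
          by_cases h2 : lam ≤ p T ω <;> simp [hr, h2, hF0 T ω]
        have := (hsup T h (a T ω) (hrange T ω)).2
        simp only [hr', h, if_true]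
        linarith
      · simp only [hr', h, if_false]
        exact (hrange T ω).1
    have := hw T hT
    calc ∑ t ∈ Finset.Icc 1 (T-1), r' t + r' T
        ≤ ∑ t ∈ Finset.Icc 1 (T-1), r t + a T ω := add_le_add hb1 hb2
      _ = a T ω + ∑ t ∈ Finset.Icc 1 (T-1), r t := by ring
      _ ≤ (1 - lam) * α * max 1 (R T ω) := this
  -- lintegral of the RHS
  set L : ENNReal := ∫⁻ ω, ENNReal.ofReal (max 1 (R T ω)) ∂μ with hL
  -- the main ENNReal chain
  have star : ∑ t ∈ Finset.Icc 1 T, μ (S t) ≤ ENNReal.ofReal α * L := by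
    have chain : ENNReal.ofReal (1 - lam) * ∑ t ∈ Finset.Icc 1 T, μ (S t)
        ≤ ENNReal.ofReal (1 - lam) * (ENNReal.ofReal α * L) := by
      calc ENNReal.ofReal (1 - lam) * ∑ t ∈ Finset.Icc 1 T, μ (S t)
          = ∑ t ∈ Finset.Icc 1 T, ENNReal.ofReal (1 - lam) * μ (S t) := Finset.mul_sum _ _ _
        _ ≤ ∑ t ∈ Finset.Icc 1 T, ∫⁻ ω, W t ω ∂μ := Finset.sum_le_sum fun t _ => keyA t
        _ ≤ ∫⁻ ω, ∑ t ∈ Finset.Icc 1 T, W t ω ∂μ := finset_sum_lintegral_le' μ _ _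
        _ ≤ ∫⁻ ω, ENNReal.ofReal ((1 - lam) * α * max 1 (R T ω)) ∂μ :=
            lintegral_mono_ae stepC
        _ = ∫⁻ ω, ENNReal.ofReal (1 - lam) *
              (ENNReal.ofReal α * ENNReal.ofReal (max 1 (R T ω))) ∂μ := by
            congr 1
            funext ω
            rw [mul_assoc, ENNReal.ofReal_mul (le_of_lt hlampos), ENNReal.ofReal_mul hα]
        _ = ENNReal.ofReal (1 - lam) * ∫⁻ ω,
              ENNReal.ofReal α * ENNReal.ofReal (max 1 (R T ω)) ∂μ :=
            lintegral_const_mul' _ _ ENNReal.ofReal_ne_top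
        _ = ENNReal.ofReal (1 - lam) * (ENNReal.ofReal α * L) := by
            rw [lintegral_const_mul' _ _ ENNReal.ofReal_ne_top]
    have hpos : ENNReal.ofReal (1 - lam) ≠ 0 :=
      (ENNReal.ofReal_pos.mpr hlampos).ne'
    exact (ENNReal.mul_le_mul_iff_right hpos ENNReal.ofReal_ne_top).mp chain
  -- measurability of R T
  have hRmeas : Measurable (R T) := by
    have : R T = fun ω => ∑ t ∈ Finset.Icc 1 T, if p t ω ≤ a t ω then (1:ℝ) else 0 :=
      funext (hR T)
    rw [this]
    apply Finset.measurable_sum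
    intro t _
    exact Measurable.ite (measurableSet_le (hp t) (ha t)) measurable_const measurable_const
  -- L is finite
  have hLne : L ≠ ⊤ := by
    have hbound : ∀ ω, ENNReal.ofReal (max 1 (R T ω)) ≤ ENNReal.ofReal T := by
      intro ω
      apply ENNReal.ofReal_le_ofReal
      apply max_le
      · exact_mod_cast hT
      · rw [hR T ω]
        calc (∑ t ∈ Finset.Icc 1 T, if p t ω ≤ a t ω then (1:ℝ) else 0)
            ≤ ∑ t ∈ Finset.Icc 1 T, (1:ℝ) := by
              apply Finset.sum_le_sum
              intro t _
              by_cases h : p t ω ≤ a t ω <;> simp [h]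
          _ = T := by simp [Nat.card_Icc]
    have : L ≤ ENNReal.ofReal T := by
      calc L ≤ ∫⁻ _, ENNReal.ofReal T ∂μ := lintegral_mono hbound
        _ = ENNReal.ofReal T := by simp
    exact ne_top_of_le_ne_top ENNReal.ofReal_ne_top this
  -- rewrite LHS
  have hform : ∀ t ω, (if t ∈ H0 ∧ p t ω ≤ a t ω then (1:ℝ) else 0)
      = Set.indicator (S t) (fun _ => (1:ℝ)) ω := by
    intro t ω
    by_cases h : t ∈ H0 ∧ p t ω ≤ a t ω <;> simp [Set.indicator_apply, hS, h]
  have hLHS : ∫ ω, (∑ t ∈ Finset.Icc 1 T, if t ∈ H0 ∧ p t ω ≤ a t ω then (1:ℝ) else 0) ∂μ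
      = ∑ t ∈ Finset.Icc 1 T, (μ (S t)).toReal := by
    simp_rw [hform]
    rw [integral_finset_sum]
    · congr 1
      funext t
      rw [integral_indicator_const _ (hSmeas t)]
      simp
      rfl
    · intro t _
      exact (integrable_const (1:ℝ)).indicator (hSmeas t)
  -- rewrite RHS
  have hRHS : ∫ ω, max 1 (R T ω) ∂μ = L.toReal := by
    rw [integral_eq_lintegral_of_nonneg_ae]
    · filter_upwards with ω
      exact le_trans zero_le_one (le_max_left _ _)
    · exact (measurable_const.max hRmeas).aestronglyMeasurable
  rw [hLHS, hRHS]
  -- conclude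
  have hfin : (∑ t ∈ Finset.Icc 1 T, μ (S t)).toReal
      = ∑ t ∈ Finset.Icc 1 T, (μ (S t)).toReal :=
    ENNReal.toReal_sum (fun t _ => measure_ne_top μ _)
  calc ∑ t ∈ Finset.Icc 1 T, (μ (S t)).toReal
      = (∑ t ∈ Finset.Icc 1 T, μ (S t)).toReal := hfin.symm
    _ ≤ (ENNReal.ofReal α * L).toReal :=
        ENNReal.toReal_mono (ENNReal.mul_ne_top ENNReal.ofReal_ne_top hLne) star
    _ = α * L.toReal := by
        rw [ENNReal.toReal_mul, ENNReal.toReal_ofReal hα]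
end

section
/- Let $\lambda \in [0,1)$, $0 < W_0 < \alpha$, $(\gamma_t)_{t\geq1}$ nonnegative with $\sum_{t\geq1}\gamma_t \leq 1$ and $\gamma_0 = 0$. For a fixed realization of $p$-values and rejection times $\tau_1 < \tau_2 < \cdots$ (with $\tau_j \leq T-1 \iff R(T-1)\geq j$), define $\mathcal{T}_0(T) = 1 + \sum_{t=2}^T\mathbf{1}\{p_{t-1}\geq\lambda\}$ and for $j \geq 1$, $\mathcal{T}_j(T) = 1 + \sum_{t=\tau_j+2}^T\mathbf{1}\{p_{t-1}\geq\lambda\}$ if $T \geq \tau_j+1$, else $0$. Let $\alpha^{ALORD}_T = (1-\lambda)\big(W_0\gamma_{\mathcal{T}_0(T)} + (\alpha - W_0)\gamma_{\mathcal{T}_1(T)} + \alpha\sum_{j\geq2}\gamma_{\mathcal{T}_j(T)}\big)$. Then for all $T \geq 1$: $\alpha^{ALORD}_T + \sum_{1\leq t\leq T-1,\,p_t\geq\lambda}\alpha^{ALORD}_t \leq (1-\lambda)\,\alpha\,\max(1, R(T))$. -/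
open Finset

private lemma gamma_le_sum (γ : ℕ → ℝ) (hγ : ∀ t, 0 ≤ γ t) (hγ0 : γ 0 = 0) (n : ℕ) :
    γ n ≤ ∑ s ∈ Finset.Icc 1 n, γ s := by
  rcases Nat.eq_zero_or_pos n with h | h
  · simp [h, hγ0]
  · exact Finset.single_le_sum (fun i _ => hγ i) (Finset.mem_Icc.mpr ⟨h, le_rfl⟩)

private lemma key (γ : ℕ → ℝ) (hγ : ∀ t, 0 ≤ γ t) (hγ0 : γ 0 = 0)
    (q : ℕ → Prop) [DecidablePred q] (f : ℕ → ℕ)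
    (hstep : ∀ S, 1 ≤ S → f (S+1) = f S + (if q S then 1 else 0) ∨ (f S = 0 ∧ f (S+1) ≤ 1)) :
    ∀ T, 1 ≤ T → γ (f T) + (∑ t ∈ Finset.Icc 1 (T-1), if q t then γ (f t) else 0)
      ≤ ∑ s ∈ Finset.Icc 1 (f T), γ s := by
  intro T
  induction T with
  | zero => omega
  | succ n ih =>
    intro _
    rcases Nat.eq_zero_or_pos n with hn | hn
    · subst hn
      simpa using gamma_le_sum γ hγ hγ0 (f 1)
    · obtain ⟨m, rfl⟩ : ∃ m, n = m + 1 := ⟨n - 1, (Nat.succ_pred_eq_of_pos hn).symm⟩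
      have ihn := ih (by omega)
      have hsplit : ∑ t ∈ Finset.Icc 1 (m + 1 + 1 - 1), (if q t then γ (f t) else 0)
          = (∑ t ∈ Finset.Icc 1 (m + 1 - 1), if q t then γ (f t) else 0)
            + (if q (m+1) then γ (f (m+1)) else 0) := by
        have : m + 1 + 1 - 1 = m + 1 := rfl
        rw [this, Finset.sum_Icc_succ_top (by omega : 1 ≤ m + 1)]
        simp
      rw [hsplit]
      rcases hstep (m+1) (by omega) with h | ⟨h0, h1'⟩
      · by_cases hq : q (m+1)
        · rw [if_pos hq] at h ⊢
          rw [h, Finset.sum_Icc_succ_top (by omega : 1 ≤ f (m+1) + 1)]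
          linarith
        · rw [if_neg hq] at h ⊢
          rw [h]
          simp only [add_zero]
          linarith
      · have hS : (∑ t ∈ Finset.Icc 1 (m + 1 - 1), if q t then γ (f t) else 0) ≤ 0 := by
          have := ihn
          rw [h0, hγ0] at this
          simpa using this
        have hite : (if q (m+1) then γ (f (m+1)) else 0) = 0 := by
          rw [h0, hγ0]; simp
        rw [hite]
        have := gamma_le_sum γ hγ hγ0 (f (m+1+1))
        linarith

/-- Wealth condition satisfied by the adaptive LORD procedure, guaranteeing
online mFDR control. -/
theorem stmt11 (lam α W0 : ℝ) (hlam : 0 ≤ lam ∧ lam < 1) (hW0 : 0 < W0 ∧ W0 < α)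
    (γ : ℕ → ℝ) (hγ : ∀ t, 0 ≤ γ t) (hγ0 : γ 0 = 0)
    (hγsum : ∀ T : ℕ, ∑ t ∈ Finset.Icc 1 T, γ t ≤ 1)
    (p : ℕ → ℝ)
    (R : ℕ → ℕ) (hR0 : R 0 = 0) (hRmono : Monotone R)
    (τ : ℕ → ℕ∞) (hτinc : ∀ j, τ j < τ (j+1) ∨ τ j = ⊤)
    (hτR : ∀ j, 1 ≤ j → ∀ s : ℕ, (τ j ≤ (s : ℕ∞) ↔ j ≤ R s))
    (𝒯 : ℕ → ℕ → ℕ)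
    (h𝒯0 : ∀ T, 𝒯 0 T = 1 + ∑ t ∈ Finset.Icc 2 T, (if lam ≤ p (t-1) then 1 else 0))
    (h𝒯j : ∀ j, 1 ≤ j → ∀ T, 𝒯 j T =
      if τ j + 1 ≤ (T : ℕ∞) then
        1 + ∑ t ∈ Finset.Icc ((τ j).toNat + 2) T, (if lam ≤ p (t-1) then 1 else 0)
      else 0)
    (aA : ℕ → ℝ)
    (haA : ∀ T, aA T = (1 - lam) * (W0 * γ (𝒯 0 T) + (α - W0) * γ (𝒯 1 T)
      + α * ∑' j : ℕ, (if 2 ≤ j then γ (𝒯 j T) else 0)))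
    (T : ℕ) (hT : 1 ≤ T) :
    aA T + (∑ t ∈ Finset.Icc 1 (T-1), if lam ≤ p t then aA t else 0)
      ≤ (1 - lam) * α * max 1 (R T : ℝ) := by
  obtain ⟨hlam0, hlam1⟩ := hlam
  obtain ⟨hW0pos, hW0α⟩ := hW0
  have hαpos : 0 < α := hW0pos.trans hW0α
  set K := R (T - 1) with hKdef
  -- step facts for 𝒯
  have hstep : ∀ j, ∀ S, 1 ≤ S →
      𝒯 j (S+1) = 𝒯 j S + (if lam ≤ p S then 1 else 0)
        ∨ (𝒯 j S = 0 ∧ 𝒯 j (S+1) ≤ 1) := by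
    intro j S hS
    rcases Nat.eq_zero_or_pos j with hj | hj
    · subst hj
      left
      rw [h𝒯0, h𝒯0, Finset.sum_Icc_succ_top (by omega : 2 ≤ S + 1)]
      simp [add_assoc]
    · by_cases h : τ j + 1 ≤ (S : ℕ∞)
      · left
        have hne : τ j ≠ ⊤ := by
          intro h'; rw [h'] at h; simp at h
        have hkS : (τ j).toNat + 1 ≤ S := by
          lift τ j to ℕ using hne with k hk
          have h2 : k + 1 ≤ S := by exact_mod_cast h
          simpa using h2
        have h' : τ j + 1 ≤ ((S+1 : ℕ) : ℕ∞) := by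
          refine h.trans ?_
          exact_mod_cast Nat.cast_le.mpr (by omega : S ≤ S + 1)
        rw [h𝒯j j hj, h𝒯j j hj, if_pos h, if_pos h',
          Finset.sum_Icc_succ_top (by omega : (τ j).toNat + 2 ≤ S + 1)]
        simp [add_assoc]
      · right
        refine ⟨by rw [h𝒯j j hj, if_neg h], ?_⟩
        rw [h𝒯j j hj]
        by_cases h2 : τ j + 1 ≤ ((S+1 : ℕ) : ℕ∞)
        · have hτS : τ j = (S : ℕ∞) := by
            have hle : τ j ≤ (S:ℕ∞) := by
              have : τ j + 1 ≤ (S:ℕ∞) + 1 := by push_cast at h2; exact_mod_cast h2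
              exact (WithTop.add_le_add_iff_right ENat.one_ne_top).mp this
            have hne : τ j ≠ ⊤ := by intro h'; rw [h'] at hle; simp at hle
            exact le_antisymm hle ((ENat.lt_add_one_iff hne).mp (not_le.mp h))
          rw [if_pos h2, hτS]
          rw [Finset.Icc_eq_empty (by simp)]
          simp
        · rw [if_neg h2]; omega
  -- G j ≤ 1
  have hGle : ∀ j, γ (𝒯 j T) + (∑ t ∈ Finset.Icc 1 (T-1), if lam ≤ p t then γ (𝒯 j t) else 0)
      ≤ 1 := by
    intro j
    refine (key γ hγ hγ0 (fun t => lam ≤ p t) (𝒯 j) (hstep j) T hT).trans (hγsum _)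
  have hGnonneg : ∀ j, 0 ≤ γ (𝒯 j T)
      + (∑ t ∈ Finset.Icc 1 (T-1), if lam ≤ p t then γ (𝒯 j t) else 0) := by
    intro j
    have h1 : 0 ≤ ∑ t ∈ Finset.Icc 1 (T-1), (if lam ≤ p t then γ (𝒯 j t) else 0) := by
      refine Finset.sum_nonneg fun t _ => ?_
      split
      · exact hγ _
      · exact le_rfl
    have h2 := hγ (𝒯 j T)
    linarith
  -- vanishing for large j
  have hzero : ∀ j, 2 ≤ j → K < j → ∀ t, t ≤ T → 𝒯 j t = 0 := by
    intro j hj hKj t htT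
    rw [h𝒯j j (by omega), if_neg]
    intro hle
    have ht1 : 1 ≤ t := by
      by_contra hc
      have : t = 0 := by omega
      subst this
      simp at hle
    have hle2 : τ j ≤ ((t-1:ℕ):ℕ∞) := by
      have he : ((t-1:ℕ):ℕ∞) + 1 = (t:ℕ∞) := by
        rw [← Nat.cast_one (R := ℕ∞), ← Nat.cast_add]
        exact congrArg _ (by omega)
      rw [← he] at hle
      exact (WithTop.add_le_add_iff_right ENat.one_ne_top).mp hle
    have hjR := (hτR j (by omega) (t-1)).mp hle2
    have hmono := hRmono (by omega : t - 1 ≤ T - 1)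
    omega
  -- rewrite the tsum
  have haA' : ∀ t, t ≤ T → aA t = (1 - lam) * (W0 * γ (𝒯 0 t) + (α - W0) * γ (𝒯 1 t)
      + α * ∑ j ∈ Finset.Icc 2 K, γ (𝒯 j t)) := by
    intro t ht
    rw [haA t]
    have hnull : ∀ j ∉ Finset.Icc 2 K, (if 2 ≤ j then γ (𝒯 j t) else 0) = 0 := by
      intro j hj
      rw [Finset.mem_Icc] at hj
      by_cases h2 : 2 ≤ j
      · rw [if_pos h2, hzero j h2 (by omega) t ht, hγ0]
      · rw [if_neg h2]
    have heq : (∑' j : ℕ, (if 2 ≤ j then γ (𝒯 j t) else 0))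
        = ∑ j ∈ Finset.Icc 2 K, γ (𝒯 j t) := by
      rw [tsum_eq_sum hnull]
      exact Finset.sum_congr rfl fun j hj => if_pos (Finset.mem_Icc.mp hj).1
    rw [heq]
  -- main identity
  have hsum : (∑ t ∈ Finset.Icc 1 (T-1), if lam ≤ p t then aA t else 0)
      = (1 - lam) * (W0 * (∑ t ∈ Finset.Icc 1 (T-1), if lam ≤ p t then γ (𝒯 0 t) else 0)
        + (α - W0) * (∑ t ∈ Finset.Icc 1 (T-1), if lam ≤ p t then γ (𝒯 1 t) else 0)
        + α * ∑ j ∈ Finset.Icc 2 K,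
            (∑ t ∈ Finset.Icc 1 (T-1), if lam ≤ p t then γ (𝒯 j t) else 0)) := by
    have step1 : (∑ t ∈ Finset.Icc 1 (T-1), if lam ≤ p t then aA t else 0)
        = ∑ t ∈ Finset.Icc 1 (T-1), ((1 - lam) * (W0 * (if lam ≤ p t then γ (𝒯 0 t) else 0)
          + (α - W0) * (if lam ≤ p t then γ (𝒯 1 t) else 0)
          + α * ∑ j ∈ Finset.Icc 2 K, (if lam ≤ p t then γ (𝒯 j t) else 0))) := by
      refine Finset.sum_congr rfl fun t ht => ?_
      have htT : t ≤ T := by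
        have := (Finset.mem_Icc.mp ht).2
        omega
      rw [haA' t htT]
      split <;> simp
    rw [step1]
    rw [← Finset.mul_sum, Finset.sum_add_distrib, Finset.sum_add_distrib,
      ← Finset.mul_sum, ← Finset.mul_sum, ← Finset.mul_sum, Finset.sum_comm]
  have hmain : aA T + (∑ t ∈ Finset.Icc 1 (T-1), if lam ≤ p t then aA t else 0)
      = (1 - lam) * (W0 * (γ (𝒯 0 T) + ∑ t ∈ Finset.Icc 1 (T-1), if lam ≤ p t then γ (𝒯 0 t) else 0)
        + (α - W0) * (γ (𝒯 1 T) + ∑ t ∈ Finset.Icc 1 (T-1), if lam ≤ p t then γ (𝒯 1 t) else 0)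
        + α * ∑ j ∈ Finset.Icc 2 K, (γ (𝒯 j T)
            + ∑ t ∈ Finset.Icc 1 (T-1), if lam ≤ p t then γ (𝒯 j t) else 0)) := by
    rw [hsum, haA' T le_rfl, Finset.sum_add_distrib]
    ring
  -- final bound
  rw [hmain]
  have hcard : (∑ j ∈ Finset.Icc 2 K, (γ (𝒯 j T)
      + ∑ t ∈ Finset.Icc 1 (T-1), if lam ≤ p t then γ (𝒯 j t) else 0)) ≤ ((K - 1 : ℕ) : ℝ) := by
    calc (∑ j ∈ Finset.Icc 2 K, (γ (𝒯 j T)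
          + ∑ t ∈ Finset.Icc 1 (T-1), if lam ≤ p t then γ (𝒯 j t) else 0))
        ≤ ∑ _j ∈ Finset.Icc 2 K, (1:ℝ) := Finset.sum_le_sum fun j _ => hGle j
      _ = ((Finset.Icc 2 K).card : ℝ) := by simp
      _ = ((K - 1 : ℕ) : ℝ) := by rw [Nat.card_Icc]; exact congrArg _ (by omega)
  have hKRT : K ≤ R T := hRmono (Nat.sub_le T 1)
  have hmaxle : (1 + ((K-1:ℕ):ℝ)) ≤ max 1 (R T : ℝ) := by
    have hn : 1 + (K-1) ≤ max 1 (R T) := by omega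
    calc (1 + ((K-1:ℕ):ℝ)) = ((1 + (K-1) : ℕ):ℝ) := by push_cast; ring
      _ ≤ ((max 1 (R T) : ℕ):ℝ) := Nat.cast_le.mpr hn
      _ = max 1 (R T : ℝ) := by rw [Nat.cast_max]; norm_num
  have hinner : (W0 * (γ (𝒯 0 T) + ∑ t ∈ Finset.Icc 1 (T-1), if lam ≤ p t then γ (𝒯 0 t) else 0)
        + (α - W0) * (γ (𝒯 1 T) + ∑ t ∈ Finset.Icc 1 (T-1), if lam ≤ p t then γ (𝒯 1 t) else 0)
        + α * ∑ j ∈ Finset.Icc 2 K, (γ (𝒯 j T)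
            + ∑ t ∈ Finset.Icc 1 (T-1), if lam ≤ p t then γ (𝒯 j t) else 0))
      ≤ α * max 1 (R T : ℝ) := by
    have h0 := hGle 0
    have h1 := hGle 1
    have b0 : W0 * (γ (𝒯 0 T) + ∑ t ∈ Finset.Icc 1 (T-1), if lam ≤ p t then γ (𝒯 0 t) else 0)
        ≤ W0 * 1 := mul_le_mul_of_nonneg_left h0 hW0pos.le
    have b1 : (α - W0) * (γ (𝒯 1 T) + ∑ t ∈ Finset.Icc 1 (T-1), if lam ≤ p t then γ (𝒯 1 t) else 0)
        ≤ (α - W0) * 1 := mul_le_mul_of_nonneg_left h1 (by linarith)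
    have b2 : α * (∑ j ∈ Finset.Icc 2 K, (γ (𝒯 j T)
          + ∑ t ∈ Finset.Icc 1 (T-1), if lam ≤ p t then γ (𝒯 j t) else 0))
        ≤ α * ((K - 1 : ℕ) : ℝ) := mul_le_mul_of_nonneg_left hcard hαpos.le
    have hmax : α * (1 + ((K-1:ℕ):ℝ)) ≤ α * max 1 (R T : ℝ) :=
      mul_le_mul_of_nonneg_left hmaxle hαpos.le
    nlinarith [b0, b1, b2, hmax]
  calc (1 - lam) * (W0 * (γ (𝒯 0 T) + ∑ t ∈ Finset.Icc 1 (T-1), if lam ≤ p t then γ (𝒯 0 t) else 0)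
        + (α - W0) * (γ (𝒯 1 T) + ∑ t ∈ Finset.Icc 1 (T-1), if lam ≤ p t then γ (𝒯 1 t) else 0)
        + α * ∑ j ∈ Finset.Icc 2 K, (γ (𝒯 j T)
            + ∑ t ∈ Finset.Icc 1 (T-1), if lam ≤ p t then γ (𝒯 j t) else 0))
      ≤ (1 - lam) * (α * max 1 (R T : ℝ)) :=
        mul_le_mul_of_nonneg_left hinner (by linarith)
    _ = (1 - lam) * α * max 1 (R T : ℝ) := by ring
end

section
/- Let $(\gamma_t)_{t\geq1}$ be a nonnegative sequence with $\sum_{t\geq1}\gamma_t \leq 1$, $(\gamma'_t)_{t\geq1}$ a nonnegative sequence with $\sum_{t\geq1}\gamma'_t \leq 1$, $\alpha \in (0,1)$, and $F_t:[0,1]\to[0,1]$ with $F_t(u) \leq u$. Define $(\alpha_T)$ recursively by $\alpha_T = \alpha\gamma_T + \sum_{t=1}^{T-1}\gamma'_{T-t}(\alpha_t - F_t(\alpha_t))$. Then for all $T \geq 1$: $\alpha_T + \sum_{t=1}^{T-1}F_t(\alpha_t) \leq \alpha$. Consequently, if additionally $\mathbb{P}(p_t \leq u) \leq F_t(u)$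 for all $t \in \mathcal{H}_0$ and $u \in [0,1]$, then $\mathbb{P}(\exists t \leq T: t \in \mathcal{H}_0, p_t \leq \alpha_t) \leq \alpha$ for all $T$. -/
open MeasureTheory Finset

/-- FWER control of the online Bonferroni procedure with smoothed super-uniformity
reward (the ρOB procedure). -/
theorem stmt14 {Ω : Type*} [MeasurableSpace Ω] (μ : Measure Ω) [IsProbabilityMeasure μ]
    (p : ℕ → Ω → ℝ) (H0 : Set ℕ) (α : ℝ) (hα : 0 < α ∧ α < 1)
    (γ : ℕ → ℝ) (hγ : ∀ t, 0 ≤ γ t)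
    (hγsum : ∀ T : ℕ, ∑ t ∈ Finset.Icc 1 T, γ t ≤ 1)
    (γ' : ℕ → ℝ) (hγ' : ∀ t, 0 ≤ γ' t)
    (hγ'sum : ∀ T : ℕ, ∑ t ∈ Finset.Icc 1 T, γ' t ≤ 1)
    (F : ℕ → ℝ → ℝ) (hF : ∀ t u, 0 ≤ u → 0 ≤ F t u ∧ F t u ≤ u)
    (a : ℕ → ℝ)
    (ha : ∀ T, 1 ≤ T → a T = α * γ T
      + ∑ t ∈ Finset.Icc 1 (T-1), γ' (T-t) * (a t - F t (a t)))
    (hsup : ∀ t ∈ H0, ∀ u ∈ Set.Icc (0:ℝ) 1, μ {ω | p t ω ≤ u} ≤ ENNReal.ofReal (F t u)) :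
    ∀ T, 1 ≤ T →
      (a T + (∑ t ∈ Finset.Icc 1 (T-1), F t (a t)) ≤ α) ∧
      μ {ω | ∃ t ∈ Finset.Icc 1 T, t ∈ H0 ∧ p t ω ≤ a t} ≤ ENNReal.ofReal α := by
  obtain ⟨hα0, hα1⟩ := hα
  set A : ℕ → ℝ := fun s => ∑ u ∈ Finset.Icc 1 s, γ' u with hA
  have hA0 : A 0 = 0 := by simp [hA]
  have hAstep : ∀ s, A (s+1) = A s + γ' (s+1) := by
    intro s
    simp [hA, Finset.sum_Icc_succ_top (by omega : 1 ≤ s + 1)]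
  have hAnn : ∀ s, 0 ≤ A s := fun s => Finset.sum_nonneg fun u _ => hγ' u
  have hA1 : ∀ s, A s ≤ 1 := fun s => hγ'sum s
  -- nonnegativity of a
  have hann : ∀ T, 1 ≤ T → 0 ≤ a T := by
    intro T
    induction T using Nat.strong_induction_on with
    | _ T ih =>
      intro hT
      rw [ha T hT]
      have h1 : 0 ≤ α * γ T := mul_nonneg hα0.le (hγ T)
      have h2 : 0 ≤ ∑ t ∈ Finset.Icc 1 (T-1), γ' (T-t) * (a t - F t (a t)) := by
        apply Finset.sum_nonneg
        intro t ht
        simp only [Finset.mem_Icc] at ht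
        have hat : 0 ≤ a t := ih t (by omega) ht.1
        exact mul_nonneg (hγ' _) (sub_nonneg.mpr (hF t (a t) hat).2)
      linarith
  have hFle : ∀ t, 1 ≤ t → F t (a t) ≤ a t := fun t ht => (hF t (a t) (hann t ht)).2
  have hFnn : ∀ t, 1 ≤ t → 0 ≤ F t (a t) := fun t ht => (hF t (a t) (hann t ht)).1
  -- key identity
  have key : ∀ T, 1 ≤ T → a T + ∑ t ∈ Finset.Icc 1 (T-1),
      ((1 - A (T - t)) * a t + A (T - t) * F t (a t)) = α * ∑ t ∈ Finset.Icc 1 T, γ t := by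
    intro T hT
    induction T, hT using Nat.le_induction with
    | base => simp [ha 1 le_rfl]
    | succ T hT ih =>
      have hT1 : T + 1 - 1 = T := by omega
      rw [hT1, ha (T+1) (by omega), hT1]
      have E1 : ∑ t ∈ Finset.Icc 1 T,
          (γ' (T+1-t) * (a t - F t (a t)) + ((1 - A (T+1-t)) * a t + A (T+1-t) * F t (a t)))
          = ∑ t ∈ Finset.Icc 1 T, ((1 - A (T - t)) * a t + A (T - t) * F t (a t)) := by
        apply Finset.sum_congr rfl
        intro t ht
        simp only [Finset.mem_Icc] at ht
        have h1 : T + 1 - t = (T - t) + 1 := by omega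
        rw [h1, hAstep]
        ring
      have E2 : ∑ t ∈ Finset.Icc 1 T,
          (γ' (T+1-t) * (a t - F t (a t)) + ((1 - A (T+1-t)) * a t + A (T+1-t) * F t (a t)))
          = ∑ t ∈ Finset.Icc 1 T, γ' (T+1-t) * (a t - F t (a t))
            + ∑ t ∈ Finset.Icc 1 T, ((1 - A (T+1-t)) * a t + A (T+1-t) * F t (a t)) :=
        Finset.sum_add_distrib
      have E3 : ∑ t ∈ Finset.Icc 1 T, ((1 - A (T - t)) * a t + A (T - t) * F t (a t))
          = ∑ t ∈ Finset.Icc 1 (T-1), ((1 - A (T - t)) * a t + A (T - t) * F t (a t)) + a T := by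
        obtain ⟨m, rfl⟩ : ∃ m, T = m + 1 := ⟨T - 1, by omega⟩
        rw [Finset.sum_Icc_succ_top (by omega : 1 ≤ m + 1)]
        simp [hA0]
      have E5 : ∑ t ∈ Finset.Icc 1 (T+1), γ t = ∑ t ∈ Finset.Icc 1 T, γ t + γ (T+1) :=
        Finset.sum_Icc_succ_top (by omega) _
      rw [E5]
      linarith [ih]
  -- first conclusion
  have part1 : ∀ T, 1 ≤ T → a T + (∑ t ∈ Finset.Icc 1 (T-1), F t (a t)) ≤ α := by
    intro T hT
    have hk := key T hT
    have hle : ∑ t ∈ Finset.Icc 1 (T-1), F t (a t)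
        ≤ ∑ t ∈ Finset.Icc 1 (T-1), ((1 - A (T - t)) * a t + A (T - t) * F t (a t)) := by
      apply Finset.sum_le_sum
      intro t ht
      simp only [Finset.mem_Icc] at ht
      nlinarith [mul_nonneg (sub_nonneg.mpr (hA1 (T - t))) (sub_nonneg.mpr (hFle t ht.1))]
    have hγle : α * ∑ t ∈ Finset.Icc 1 T, γ t ≤ α := by nlinarith [hγsum T]
    linarith
  have haα : ∀ t, 1 ≤ t → a t ≤ α := by
    intro t ht
    have h1 := part1 t ht
    have h2 : 0 ≤ ∑ s ∈ Finset.Icc 1 (t-1), F s (a s) :=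
      Finset.sum_nonneg fun s hs => hFnn s (Finset.mem_Icc.mp hs).1
    linarith
  intro T hT
  refine ⟨part1 T hT, ?_⟩
  have hsumF : ∑ t ∈ Finset.Icc 1 T, F t (a t) ≤ α := by
    obtain ⟨m, rfl⟩ : ∃ m, T = m + 1 := ⟨T - 1, by omega⟩
    rw [Finset.sum_Icc_succ_top (by omega : 1 ≤ m + 1)]
    have h1 := part1 (m+1) (by omega)
    have h2 := hFle (m+1) (by omega)
    simp only [Nat.add_sub_cancel] at h1
    linarith
  calc μ {ω | ∃ t ∈ Finset.Icc 1 T, t ∈ H0 ∧ p t ω ≤ a t}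
      ≤ ∑ t ∈ Finset.Icc 1 T, μ {ω | t ∈ H0 ∧ p t ω ≤ a t} := by
        refine le_trans (measure_mono ?_) (measure_biUnion_finset_le _ _)
        intro ω hω
        obtain ⟨t, ht, h⟩ := hω
        exact Set.mem_biUnion ht h
    _ ≤ ∑ t ∈ Finset.Icc 1 T, ENNReal.ofReal (F t (a t)) := by
        apply Finset.sum_le_sum
        intro t ht
        simp only [Finset.mem_Icc] at ht
        by_cases hH : t ∈ H0
        · have hs : {ω | t ∈ H0 ∧ p t ω ≤ a t} = {ω | p t ω ≤ a t} := by
            ext ω; simp [hH]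
          rw [hs]
          exact hsup t hH (a t) ⟨hann t ht.1, le_trans (haα t ht.1) hα1.le⟩
        · have hs : {ω | t ∈ H0 ∧ p t ω ≤ a t} = ∅ := by
            ext ω; simp [hH]
          simp [hs]
    _ = ENNReal.ofReal (∑ t ∈ Finset.Icc 1 T, F t (a t)) :=
        (ENNReal.ofReal_sum_of_nonneg fun t ht => hFnn t (Finset.mem_Icc.mp ht).1).symm
    _ ≤ ENNReal.ofReal α := ENNReal.ofReal_le_ofReal hsumF
end

section
/- Let $(\alpha^0_t)_{t\geq1}$ be nonnegative with, almost surely for all $T$, $\alpha^0_T + \sum_{1\leq t\leq T-1,\,p_t\geq\lambda}\alpha^0_t \leq (1-\lambda)\alpha\max(1,R(T))$ where $R(T)$ counts rejections of the rewarded procedure up to time $T$. Let $(\gamma'_t)$ be nonnegative with $\sum_{t\geq1}\gamma'_t \leq 1$, let $F_t(u) \leq u$, and define the rewarded critical values by $\alpha_T = \alpha^0_T + \sum_{1\leq t\leq T-1,\,p_t\geq\lambda}\gamma'_{T-t}(\alpha_t - F_t(\alpha_t)) + \mathbf{1}\{p_{T-1}<\lambda\}(\alpha_{T-1}-\alpha^0_{T-1})$.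 Then almost surely, for all $T \geq 1$: $\alpha_T + \sum_{1\leq t\leq T-1,\,p_t\geq\lambda}F_t(\alpha_t) \leq (1-\lambda)\,\alpha\,\max(1, R(T))$. -/
open Finset

lemma rep19 (lam : ℝ) (α0 : ℕ → ℝ) (p : ℕ → ℝ) (γ' : ℕ → ℝ)
    (F : ℕ → ℝ → ℝ) (a : ℕ → ℝ)
    (ha : ∀ T, 1 ≤ T → a T = α0 T
      + (∑ t ∈ Finset.Icc 1 (T-1), if lam ≤ p t then γ' (T-t) * (a t - F t (a t)) else 0)
      + (if 2 ≤ T ∧ p (T-1) < lam then a (T-1) - α0 (T-1) else 0)) :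
    ∀ T, 1 ≤ T →
      a T + (∑ t ∈ Finset.Icc 1 (T-1), if lam ≤ p t then
          (1 - ∑ u ∈ Finset.Icc 1 (T-t), γ' u) * a t
            + (∑ u ∈ Finset.Icc 1 (T-t), γ' u) * F t (a t) else 0)
        = α0 T + (∑ t ∈ Finset.Icc 1 (T-1), if lam ≤ p t then α0 t else 0) := by
  intro T hT
  induction T, hT using Nat.le_induction with
  | base => simpa using ha 1 le_rfl
  | succ n hn IH =>
    obtain ⟨S, rfl⟩ := Nat.exists_eq_add_of_le hn
    have hE : 1 + S = S + 1 := by omega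
    rw [hE] at IH ⊢
    simp only [Nat.add_sub_cancel] at IH ⊢
    have ha' := ha (S + 1 + 1) (by omega)
    simp only [Nat.add_sub_cancel] at ha'
    have hδ : (if 2 ≤ S + 1 + 1 ∧ p (S + 1) < lam then a (S+1) - α0 (S+1) else 0)
        = (if p (S+1) < lam then a (S+1) - α0 (S+1) else 0) := by
      have h2 : (2 ≤ S + 1 + 1) := by omega
      simp [h2]
    rw [hδ] at ha'
    -- combine the two sums
    have hcomb : (∑ t ∈ Finset.Icc 1 (S+1), if lam ≤ p t then γ' (S+1+1-t) * (a t - F t (a t)) else 0)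
        + (∑ t ∈ Finset.Icc 1 (S+1), if lam ≤ p t then
            (1 - ∑ u ∈ Finset.Icc 1 (S+1+1-t), γ' u) * a t
              + (∑ u ∈ Finset.Icc 1 (S+1+1-t), γ' u) * F t (a t) else 0)
        = ∑ t ∈ Finset.Icc 1 (S+1), if lam ≤ p t then
            (1 - ∑ u ∈ Finset.Icc 1 (S+1-t), γ' u) * a t
              + (∑ u ∈ Finset.Icc 1 (S+1-t), γ' u) * F t (a t) else 0 := by
      rw [← Finset.sum_add_distrib]
      refine Finset.sum_congr rfl ?_
      intro t ht
      rw [Finset.mem_Icc] at ht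
      have h3 : S + 1 + 1 - t = (S + 1 - t) + 1 := by omega
      rw [h3]
      rw [Finset.sum_Icc_succ_top (by omega : 1 ≤ S + 1 - t + 1)]
      by_cases hp : lam ≤ p t
      · simp only [if_pos hp]; ring
      · simp [hp]
    -- split the top term t = S+1
    have hsplitA : (∑ t ∈ Finset.Icc 1 (S+1), if lam ≤ p t then
            (1 - ∑ u ∈ Finset.Icc 1 (S+1-t), γ' u) * a t
              + (∑ u ∈ Finset.Icc 1 (S+1-t), γ' u) * F t (a t) else 0)
        = (∑ t ∈ Finset.Icc 1 S, if lam ≤ p t then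
            (1 - ∑ u ∈ Finset.Icc 1 (S+1-t), γ' u) * a t
              + (∑ u ∈ Finset.Icc 1 (S+1-t), γ' u) * F t (a t) else 0)
          + (if lam ≤ p (S+1) then a (S+1) else 0) := by
      rw [Finset.sum_Icc_succ_top (by omega : 1 ≤ S + 1)]
      congr 1
      have h0 : S + 1 - (S + 1) = 0 := by omega
      rw [h0]
      simp
    have hsplitB : (∑ t ∈ Finset.Icc 1 (S+1), if lam ≤ p t then α0 t else 0)
        = (∑ t ∈ Finset.Icc 1 S, if lam ≤ p t then α0 t else 0)
          + (if lam ≤ p (S+1) then α0 (S+1) else 0) :=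
      Finset.sum_Icc_succ_top (by omega) _
    rw [ha', hsplitB]
    by_cases hp : lam ≤ p (S+1)
    · have hp' : ¬ p (S+1) < lam := not_lt.mpr hp
      rw [if_neg hp'] at *
      rw [if_pos hp] at hsplitA ⊢
      linarith [hcomb, hsplitA, IH]
    · have hp' : p (S+1) < lam := not_le.mp hp
      rw [if_pos hp'] at *
      rw [if_neg hp] at hsplitA ⊢
      linarith [hcomb, hsplitA, IH]

/-- Core deterministic inequality of the general rewarded-mFDR theorem: the rewarded
critical values satisfy the sufficient mFDR wealth condition. -/
theorem stmt19 (lam α : ℝ) (hlam : 0 ≤ lam ∧ lam < 1)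
    (α0 : ℕ → ℝ) (hα0 : ∀ t, 0 ≤ α0 t)
    (p : ℕ → ℝ)
    (γ' : ℕ → ℝ) (hγ' : ∀ t, 0 ≤ γ' t)
    (hγ'sum : ∀ T : ℕ, ∑ t ∈ Finset.Icc 1 T, γ' t ≤ 1)
    (F : ℕ → ℝ → ℝ) (hF : ∀ t u, F t u ≤ u)
    (a : ℕ → ℝ)
    (ha : ∀ T, 1 ≤ T → a T = α0 T
      + (∑ t ∈ Finset.Icc 1 (T-1), if lam ≤ p t then γ' (T-t) * (a t - F t (a t)) else 0)
      + (if 2 ≤ T ∧ p (T-1) < lam then a (T-1) - α0 (T-1) else 0))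
    (R : ℕ → ℕ)
    (hR : ∀ T, R T = ∑ t ∈ Finset.Icc 1 T, if p t ≤ a t then 1 else 0)
    (hα0wealth : ∀ T, 1 ≤ T →
      α0 T + (∑ t ∈ Finset.Icc 1 (T-1), if lam ≤ p t then α0 t else 0)
        ≤ (1 - lam) * α * max 1 (R T : ℝ)) :
    ∀ T, 1 ≤ T →
      a T + (∑ t ∈ Finset.Icc 1 (T-1), if lam ≤ p t then F t (a t) else 0)
        ≤ (1 - lam) * α * max 1 (R T : ℝ) := by
  intro T hT
  have hrep := rep19 lam α0 p γ' F a ha T hT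
  have hbound : (∑ t ∈ Finset.Icc 1 (T-1), if lam ≤ p t then F t (a t) else 0)
      ≤ ∑ t ∈ Finset.Icc 1 (T-1), if lam ≤ p t then
          (1 - ∑ u ∈ Finset.Icc 1 (T-t), γ' u) * a t
            + (∑ u ∈ Finset.Icc 1 (T-t), γ' u) * F t (a t) else 0 := by
    refine Finset.sum_le_sum fun t ht => ?_
    by_cases hp : lam ≤ p t
    · simp only [if_pos hp]
      have h1 : (∑ u ∈ Finset.Icc 1 (T-t), γ' u) ≤ 1 := hγ'sum _
      have h2 : F t (a t) ≤ a t := hF t (a t)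
      nlinarith
    · simp [hp]
  calc a T + (∑ t ∈ Finset.Icc 1 (T-1), if lam ≤ p t then F t (a t) else 0)
      ≤ a T + (∑ t ∈ Finset.Icc 1 (T-1), if lam ≤ p t then
          (1 - ∑ u ∈ Finset.Icc 1 (T-t), γ' u) * a t
            + (∑ u ∈ Finset.Icc 1 (T-t), γ' u) * F t (a t) else 0) := by linarith
    _ = α0 T + (∑ t ∈ Finset.Icc 1 (T-1), if lam ≤ p t then α0 t else 0) := hrep
    _ ≤ (1 - lam) * α * max 1 (R T : ℝ) := hα0wealth T hT
end
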